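/- arXiv:quant-ph/0512217 — 9 statements merged into one kernel-verified Lean document; each statement's English description precedes it below -/
import Mathlib

section
/- For any Hermitian traceless operators M, N on a d-dimensional complex Hilbert space, and any complete set of d+1 mutually unbiased bases {|ψ^a_b⟩ : a = 0,…,d, b = 0,…,d−1}, the sum over all a, b of ⟨ψ^a_b| M |ψ^a_b⟩⟨ψ^a_b| N |ψ^a_b⟩ equals tr(MN). -/
/-!
A complete set of `d + 1` mutually unbiased bases is a complex projective 2-design: its second
frame operator `S = ∑ |ψ⟩⟨ψ| ⊗ |ψ⟩⟨ψ|` equals `1 + SWAP`. Both sides are Hermitian, and the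
overlaps `|⟨ψ|ψ'⟩|² ∈ {1, 0, 1/d}` give `tr (S S) = tr (S (1 + SWAP)) = tr ((1 + SWAP)²) = 2d(d+1)`,
so the Hilbert–Schmidt norm of `S - (1 + SWAP)` vanishes. Pairing with `M ⊗ N` then gives
`∑ ⟨ψ|M|ψ⟩⟨ψ|N|ψ⟩ = tr ((M ⊗ N) S) = tr M · tr N + tr (M N)`.
-/

open Matrix BigOperators Kronecker

namespace Matrix

section swap

variable {n R : Type*} [DecidableEq n]

omit [DecidableEq n] in
theorem _root_.Equiv.prodComm_inv :
    (Equiv.prodComm n n : Equiv.Perm (n × n))⁻¹ = Equiv.prodComm n n :=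
  Equiv.prodComm_symm n n

variable (n R) in
abbrev swapMatrix [Zero R] [One R] : Matrix (n × n) (n × n) R :=
  Equiv.Perm.permMatrix R (Equiv.prodComm n n)

theorem isHermitian_swapMatrix [NonAssocSemiring R] [StarRing R] :
    (swapMatrix n R).IsHermitian := by
  rw [IsHermitian, conjTranspose_permMatrix, Equiv.prodComm_inv]

variable [Fintype n]

theorem swapMatrix_mul_self [NonAssocSemiring R] : swapMatrix n R * swapMatrix n R = 1 := by
  rw [← permMatrix_mul]
  nth_rewrite 1 [← Equiv.prodComm_inv]
  rw [inv_mul_cancel, permMatrix_one]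

theorem trace_kronecker_mul_swapMatrix [CommSemiring R] (X Y : Matrix n n R) :
    (X ⊗ₖ Y * swapMatrix n R).trace = (X * Y).trace := by
  simp [trace, PEquiv.mul_toMatrix_toPEquiv, Fintype.sum_prod_type, mul_apply]

theorem trace_swapMatrix [CommSemiring R] : (swapMatrix n R).trace = Fintype.card n := by
  simpa [one_kronecker_one] using trace_kronecker_mul_swapMatrix (1 : Matrix n n R) 1

end swap

section hilbertSchmidt

variable {n R : Type*} [Fintype n] [CommRing R] [PartialOrder R] [StarRing R] [StarOrderedRing R]
  [NoZeroDivisors R]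

theorem IsHermitian.eq_of_trace_mul_eq {A B : Matrix n n R} (hA : A.IsHermitian)
    (hB : B.IsHermitian) (hAA : (A * A).trace = (A * B).trace)
    (hBB : (B * B).trace = (A * B).trace) : A = B := by
  rw [← sub_eq_zero, ← trace_conjTranspose_mul_self_eq_zero_iff, (hA.sub hB).eq, sub_mul, mul_sub,
    mul_sub, trace_sub, trace_sub, trace_sub, trace_mul_comm B A, hAA, hBB, sub_self]

end hilbertSchmidt

section secondFrameOperator

variable {ι n R : Type*} [Fintype ι] [Fintype n]

theorem trace_mul_vecMulVec [CommSemiring R] (M : Matrix n n R) (v w : n → R) :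
    (M * vecMulVec v w).trace = w ⬝ᵥ (M *ᵥ v) := by
  rw [trace_mul_comm, vecMulVec_mul, trace_vecMulVec, dotProduct_comm, dotProduct_mulVec]

def secondFrameOperator [CommSemiring R] [StarRing R] (v : ι → n → R) :
    Matrix (n × n) (n × n) R :=
  ∑ i, vecMulVec (v i) (star (v i)) ⊗ₖ vecMulVec (v i) (star (v i))

theorem trace_kronecker_mul_secondFrameOperator [CommSemiring R] [StarRing R]
    (M N : Matrix n n R) (v : ι → n → R) :
    (M ⊗ₖ N * secondFrameOperator v).trace =
      ∑ i, (star (v i) ⬝ᵥ (M *ᵥ v i)) * (star (v i) ⬝ᵥ (N *ᵥ v i)) := by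
  simp only [secondFrameOperator, Finset.mul_sum, trace_sum, ← mul_kronecker_mul, trace_kronecker,
    trace_mul_vecMulVec]

omit [Fintype n] in
theorem isHermitian_secondFrameOperator [CommSemiring R] [StarRing R] (v : ι → n → R) :
    (secondFrameOperator v).IsHermitian := by
  simp only [IsHermitian, secondFrameOperator, conjTranspose_sum, conjTranspose_kronecker,
    conjTranspose_vecMulVec, star_star]

open scoped ComplexOrder

variable {𝕜 : Type*} [RCLike 𝕜]

theorem star_dotProduct_vecMulVec_star_mulVec (v w : n → 𝕜) :
    star v ⬝ᵥ (vecMulVec w (star w) *ᵥ v) = (‖star v ⬝ᵥ w‖ ^ 2 : 𝕜) := by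
  rw [vecMulVec_mulVec, dotProduct_smul, op_smul_eq_mul, star_dotProduct (v := w),
    RCLike.star_def, RCLike.mul_conj]

theorem trace_secondFrameOperator_mul_self (v : ι → n → 𝕜) :
    (secondFrameOperator v * secondFrameOperator v).trace =
      ∑ i, ∑ j, (‖star (v i) ⬝ᵥ v j‖ ^ 4 : 𝕜) := by
  nth_rewrite 1 [secondFrameOperator]
  simp only [Finset.sum_mul, trace_sum, trace_kronecker_mul_secondFrameOperator,
    star_dotProduct_vecMulVec_star_mulVec, ← pow_add]
  exact Finset.sum_comm

theorem trace_secondFrameOperator_mul_one_add_swapMatrix [DecidableEq n] {v : ι → n → 𝕜}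
    (hv : ∀ i, star (v i) ⬝ᵥ v i = 1) :
    (secondFrameOperator v * (1 + swapMatrix n 𝕜)).trace = 2 * Fintype.card ι := by
  simp only [mul_add, mul_one, trace_add, secondFrameOperator, Finset.sum_mul, trace_sum,
    trace_kronecker, trace_kronecker_mul_swapMatrix, trace_vecMulVec, trace_mul_vecMulVec,
    star_dotProduct_vecMulVec_star_mulVec, dotProduct_comm (v _), hv, norm_one, RCLike.ofReal_one,
    one_pow, Finset.sum_const, Finset.card_univ, nsmul_eq_mul]
  ring

theorem secondFrameOperator_eq_one_add_swapMatrix [DecidableEq n] {v : ι → n → 𝕜}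
    (hv : ∀ i, star (v i) ⬝ᵥ v i = 1)
    (hv4 : ∑ i, ∑ j, ‖star (v i) ⬝ᵥ v j‖ ^ 4 = 2 * Fintype.card ι)
    (hcard : Fintype.card ι = Fintype.card n * (Fintype.card n + 1)) :
    secondFrameOperator v = 1 + swapMatrix n 𝕜 := by
  have hBB : ((1 + swapMatrix n 𝕜) * (1 + swapMatrix n 𝕜)).trace = 2 * Fintype.card ι := by
    rw [add_mul, mul_add, mul_add, swapMatrix_mul_self]
    simp only [trace_add, mul_one, one_mul, trace_one, trace_swapMatrix, Fintype.card_prod, hcard]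
    push_cast
    ring
  refine (isHermitian_secondFrameOperator v).eq_of_trace_mul_eq
    ((isHermitian_one).add isHermitian_swapMatrix) ?_ ?_
  · rw [trace_secondFrameOperator_mul_self, trace_secondFrameOperator_mul_one_add_swapMatrix hv]
    exact_mod_cast hv4
  · rw [hBB, trace_secondFrameOperator_mul_one_add_swapMatrix hv]

end secondFrameOperator

end Matrix

section mutuallyUnbiased

variable {n 𝕜 : Type*} [Fintype n] [RCLike 𝕜]

open scoped ComplexOrder in
theorem star_dotProduct_self_eq_one_of_norm {v : n → 𝕜} (h : ‖star v ⬝ᵥ v‖ = 1) :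
    star v ⬝ᵥ v = 1 := by
  rw [← RCLike.norm_of_nonneg' (dotProduct_star_self_nonneg v), h, RCLike.ofReal_one]

theorem sum_sum_norm_pow_four_of_mub {d : ℕ} {ψ : Fin (d + 1) → Fin d → n → 𝕜}
    (hMUB : ∀ a b a' b', ‖star (ψ a b) ⬝ᵥ ψ a' b'‖ =
      if a = a' ∧ b = b' then 1 else if a = a' then 0 else 1 / Real.sqrt d) :
    ∑ p, ∑ q, ‖star (Function.uncurry ψ p) ⬝ᵥ Function.uncurry ψ q‖ ^ 4 =
      2 * Fintype.card (Fin (d + 1) × Fin d) := by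
  have hinner : ∀ a b, ∑ a', ∑ b', ‖star (ψ a b) ⬝ᵥ ψ a' b'‖ ^ 4 = 2 := by
    intro a b
    have hd : (d : ℝ) ≠ 0 := by have := b.pos; positivity
    have hrow : ∀ a', ∑ b', ‖star (ψ a b) ⬝ᵥ ψ a' b'‖ ^ 4 =
        1 / d + if a = a' then 1 - 1 / (d : ℝ) else 0 := by
      intro a'
      simp only [hMUB]
      split_ifs with h
      · simp [h]
      · have hsqrt : √(d : ℝ) ^ 4 = d ^ 2 := by
          rw [show 4 = 2 * 2 from rfl, pow_mul, Real.sq_sqrt d.cast_nonneg]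
        simp only [h, false_and, if_false, one_div, inv_pow, hsqrt, Finset.sum_const,
          Finset.card_univ, Fintype.card_fin, nsmul_eq_mul, add_zero]
        field_simp
    rw [Finset.sum_congr rfl fun a' _ => hrow a', Finset.sum_add_distrib]
    simp only [Finset.sum_const, Finset.card_univ, Fintype.card_fin, nsmul_eq_mul, Nat.cast_add,
      Nat.cast_one, Finset.sum_ite_eq, Finset.mem_univ, if_true]
    field_simp
    ring
  simp only [Fintype.sum_prod_type, Function.uncurry_apply_pair, hinner, Finset.sum_const,
    Finset.card_univ, Fintype.card_prod, Fintype.card_fin, nsmul_eq_mul]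
  push_cast
  ring

end mutuallyUnbiased

theorem mub_sum_eq_trace_mul_of_traceless_general
    (d : ℕ) (ψ : Fin (d + 1) → Fin d → (Fin d → ℂ))
    (hMUB : ∀ a b a' b', ‖star (ψ a b) ⬝ᵥ ψ a' b'‖ =
      if a = a' ∧ b = b' then 1 else if a = a' then 0 else 1 / Real.sqrt d)
    (M N : Matrix (Fin d) (Fin d) ℂ)
    (hMt : M.trace = 0) :
    ∑ a : Fin (d + 1), ∑ b : Fin d,
      (star (ψ a b) ⬝ᵥ (M *ᵥ ψ a b)) * (star (ψ a b) ⬝ᵥ (N *ᵥ ψ a b))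
      = (M * N).trace := by
  have hunit : ∀ p, star (Function.uncurry ψ p) ⬝ᵥ Function.uncurry ψ p = 1 := fun ⟨a, b⟩ =>
    star_dotProduct_self_eq_one_of_norm (by simpa using hMUB a b a b)
  have hdesign : secondFrameOperator (Function.uncurry ψ) = 1 + swapMatrix (Fin d) ℂ :=
    secondFrameOperator_eq_one_add_swapMatrix hunit (sum_sum_norm_pow_four_of_mub hMUB)
      (by simp [mul_comm])
  have h := trace_kronecker_mul_secondFrameOperator M N (Function.uncurry ψ)
  rw [hdesign, mul_add, mul_one, trace_add, trace_kronecker, hMt, zero_mul, zero_add,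
    trace_kronecker_mul_swapMatrix, Fintype.sum_prod_type] at h
  exact h.symm

theorem mub_sum_eq_trace_mul_of_traceless
    (d : ℕ) (ψ : Fin (d + 1) → Fin d → (Fin d → ℂ))
    (hMUB : ∀ a b a' b', ‖star (ψ a b) ⬝ᵥ ψ a' b'‖ =
      if a = a' ∧ b = b' then 1 else if a = a' then 0 else 1 / Real.sqrt d)
    (M N : Matrix (Fin d) (Fin d) ℂ)
    (hM : M.IsHermitian) (hN : N.IsHermitian)
    (hMt : M.trace = 0) (hNt : N.trace = 0) :
    ∑ a : Fin (d + 1), ∑ b : Fin d,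
      (star (ψ a b) ⬝ᵥ (M *ᵥ ψ a b)) * (star (ψ a b) ⬝ᵥ (N *ᵥ ψ a b))
      = (M * N).trace :=
  mub_sum_eq_trace_mul_of_traceless_general d ψ hMUB M N hMt
end

section
/- For any linear operators M, N on a d-dimensional complex Hilbert space, and any complete set of d+1 mutually unbiased bases, the sum over all a ∈ {0,…,d} and b ∈ {0,…,d−1} of ⟨ψ^a_b| M |ψ^a_b⟩⟨ψ^a_b| N |ψ^a_b⟩ equals tr(MN) + (tr M)(tr N). -/
/-!
Write `P_p = |ψ_p⟩⟨ψ_p|` for the `d(d+1)` vectors of the bases and `S` for the swap operator on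
`ℂ^d ⊗ ℂ^d`. Since `⟨ψ|M|ψ⟩⟨ψ|N|ψ⟩ = tr((M ⊗ N)(P ⊗ P))`, the sum equals `tr((M ⊗ N) T)` with
`T = ∑_p P_p ⊗ P_p`, while `tr(MN) + tr M tr N = tr((M ⊗ N)(1 + S))`. So it suffices that
`T = 1 + S`, i.e. that a complete set of mutually unbiased bases is a complex projective 2-design.
This follows by computing the Hilbert–Schmidt norm of `T - (1 + S)`: every trace in its expansion is
fixed by the normalisation, the number of vectors and the overlaps `|⟨ψ_p|ψ_q⟩|⁴`, and they add up
to zero.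
-/

open Matrix
open scoped Kronecker

namespace Matrix

section Swap

variable {n R : Type*} [DecidableEq n]

def kroneckerSwap (n R : Type*) [DecidableEq n] [Zero R] [One R] : Matrix (n × n) (n × n) R :=
  (Equiv.prodComm n n).toPEquiv.toMatrix

lemma conjTranspose_kroneckerSwap [Semiring R] [StarRing R] :
    (kroneckerSwap n R)ᴴ = kroneckerSwap n R := by
  ext x y
  simp [kroneckerSwap, apply_ite star, eq_comm (a := y), Prod.swap_eq_iff_eq_swap]

variable [Fintype n]

lemma kroneckerSwap_mul_kroneckerSwap [NonAssocSemiring R] :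
    kroneckerSwap n R * kroneckerSwap n R = 1 := by
  rw [kroneckerSwap, PEquiv.toMatrix_toPEquiv_mul]
  ext x y
  simp [one_apply]

lemma trace_kroneckerSwap [NonAssocSemiring R] :
    trace (kroneckerSwap n R) = Fintype.card n := by
  simp only [trace, diag, kroneckerSwap, Fintype.sum_prod_type]
  simp [Prod.ext_iff, eq_comm (a := _)]

lemma trace_kroneckerSwap_mul_kronecker [CommSemiring R] (A B : Matrix n n R) :
    trace (kroneckerSwap n R * (A ⊗ₖ B)) = trace (A * B) := by
  rw [kroneckerSwap, PEquiv.toMatrix_toPEquiv_mul]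
  simp only [trace, diag, submatrix_apply, mul_apply, Fintype.sum_prod_type]
  exact Finset.sum_comm

end Swap

section SecondMoment

variable {n ι R : Type*} [CommSemiring R] [StarRing R]

def secondMoment (u : ι → n → R) [Fintype ι] : Matrix (n × n) (n × n) R :=
  ∑ p, vecMulVec (u p) (star (u p)) ⊗ₖ vecMulVec (u p) (star (u p))

lemma conjTranspose_secondMoment [Fintype ι] (u : ι → n → R) :
    (secondMoment u)ᴴ = secondMoment u := by
  simp [secondMoment, conjTranspose_sum, conjTranspose_kronecker, conjTranspose_vecMulVec]

variable [Fintype n]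

lemma star_dotProduct_mulVec_eq_trace (M : Matrix n n R) (u : n → R) :
    star u ⬝ᵥ M *ᵥ u = trace (M * vecMulVec u (star u)) := by
  rw [mul_vecMulVec, trace_vecMulVec, dotProduct_comm]

lemma trace_vecMulVec_star_mul_vecMulVec_star (u v : n → R) :
    trace (vecMulVec u (star u) * vecMulVec v (star v)) = (star u ⬝ᵥ v) * (star v ⬝ᵥ u) := by
  rw [vecMulVec_mul_vecMulVec, trace_vecMulVec, dotProduct_smul, smul_eq_mul, dotProduct_comm u]

variable [Fintype ι]

lemma sum_star_dotProduct_mulVec_mul_eq_trace_kronecker_mul_secondMoment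
    (u : ι → n → R) (M N : Matrix n n R) :
    ∑ p, (star (u p) ⬝ᵥ M *ᵥ u p) * (star (u p) ⬝ᵥ N *ᵥ u p) =
      trace ((M ⊗ₖ N) * secondMoment u) := by
  rw [secondMoment, Matrix.mul_sum, trace_sum]
  simp only [← mul_kronecker_mul, trace_kronecker, star_dotProduct_mulVec_eq_trace]

lemma trace_secondMoment {u : ι → n → R} (hu : ∀ p, star (u p) ⬝ᵥ u p = 1) :
    trace (secondMoment u) = Fintype.card ι := by
  simp [secondMoment, trace_sum, trace_kronecker, trace_vecMulVec, dotProduct_comm (u _), hu]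

lemma trace_kroneckerSwap_mul_secondMoment [DecidableEq n] {u : ι → n → R}
    (hu : ∀ p, star (u p) ⬝ᵥ u p = 1) :
    trace (kroneckerSwap n R * secondMoment u) = Fintype.card ι := by
  simp [secondMoment, Matrix.mul_sum, trace_sum, trace_kroneckerSwap_mul_kronecker,
    trace_vecMulVec_star_mul_vecMulVec_star, hu]

lemma trace_secondMoment_mul_self (u : ι → n → R) :
    trace (secondMoment u * secondMoment u) =
      ∑ p, ∑ q, ((star (u p) ⬝ᵥ u q) * (star (u q) ⬝ᵥ u p)) ^ 2 := by
  simp only [secondMoment, Finset.sum_mul, Finset.mul_sum, trace_sum, ← mul_kronecker_mul,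
    trace_kronecker, trace_vecMulVec_star_mul_vecMulVec_star, sq]
  exact Finset.sum_congr rfl fun p _ => Finset.sum_congr rfl fun q _ => by ring

end SecondMoment

section RCLike

variable {𝕜 n ι : Type*} [RCLike 𝕜] [Fintype n]

lemma star_dotProduct_mul_star_dotProduct_eq_norm_sq (u v : n → 𝕜) :
    (star u ⬝ᵥ v) * (star v ⬝ᵥ u) = ((‖star u ⬝ᵥ v‖ ^ 2 : ℝ) : 𝕜) := by
  rw [← star_star u, star_dotProduct_star, star_star, RCLike.star_def, RCLike.mul_conj,
    RCLike.ofReal_pow]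

open scoped ComplexOrder in
theorem secondMoment_eq_one_add_kroneckerSwap [DecidableEq n] [Fintype ι] {u : ι → n → 𝕜}
    (hu : ∀ p, star (u p) ⬝ᵥ u p = 1)
    (hcard : Fintype.card ι = Fintype.card n * (Fintype.card n + 1))
    (hpot : ∑ p, ∑ q, ‖star (u p) ⬝ᵥ u q‖ ^ 4 = 2 * Fintype.card n * (Fintype.card n + 1)) :
    secondMoment u = 1 + kroneckerSwap n 𝕜 := by
  set T := secondMoment u
  set S := kroneckerSwap n 𝕜
  have hTT : trace (T * T) = 2 * Fintype.card n * (Fintype.card n + 1) := by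
    simp_rw [T, trace_secondMoment_mul_self, star_dotProduct_mul_star_dotProduct_eq_norm_sq,
      ← RCLike.ofReal_pow, ← pow_mul]
    exact_mod_cast hpot
  have hT : trace T = Fintype.card n * (Fintype.card n + 1) := by
    rw [trace_secondMoment hu, hcard]
    push_cast
    ring
  have hST : trace (S * T) = Fintype.card n * (Fintype.card n + 1) := by
    rw [trace_kroneckerSwap_mul_secondMoment hu, hcard]
    push_cast
    ring
  have hSS : S * S = 1 := kroneckerSwap_mul_kroneckerSwap
  have hS : trace S = Fintype.card n := trace_kroneckerSwap
  have hT_herm : Tᴴ = T := conjTranspose_secondMoment u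
  have hS_herm : Sᴴ = S := conjTranspose_kroneckerSwap
  rw [← sub_eq_zero, ← trace_conjTranspose_mul_self_eq_zero_iff, conjTranspose_sub,
    conjTranspose_add, conjTranspose_one, hT_herm, hS_herm]
  simp only [sub_mul, mul_sub, add_mul, mul_add, one_mul, mul_one, trace_sub, trace_add,
    trace_mul_comm T S, hSS, trace_one, Fintype.card_prod, hTT, hT, hST, hS]
  push_cast
  ring

end RCLike

end Matrix

def IsCompleteMUB {d : ℕ} (ψ : Fin (d + 1) → Fin d → Fin d → ℂ) : Prop :=
  ∀ a b a' b', ‖star (ψ a b) ⬝ᵥ ψ a' b'‖ =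
    if a = a' ∧ b = b' then 1 else if a = a' then 0 else 1 / Real.sqrt d

namespace IsCompleteMUB

variable {d : ℕ} {ψ : Fin (d + 1) → Fin d → Fin d → ℂ}

open scoped ComplexOrder in
lemma star_dotProduct_self (h : IsCompleteMUB ψ) (a : Fin (d + 1)) (b : Fin d) :
    star (ψ a b) ⬝ᵥ ψ a b = 1 := by
  rw [Complex.eq_coe_norm_of_nonneg (dotProduct_star_self_nonneg _), h a b a b]
  simp

lemma sum_sum_norm_star_dotProduct_pow_four (h : IsCompleteMUB ψ) (a : Fin (d + 1)) (b : Fin d) :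
    ∑ a', ∑ b', ‖star (ψ a b) ⬝ᵥ ψ a' b'‖ ^ 4 = 2 := by
  have hd : (d : ℝ) ≠ 0 := Nat.cast_ne_zero.mpr (Fin.pos b).ne'
  have hfar : ∀ a' ∈ ({a}ᶜ : Finset _), ∑ b', ‖star (ψ a b) ⬝ᵥ ψ a' b'‖ ^ 4 = 1 / d := by
    intro a' ha'
    have hne : a ≠ a' := by simpa [eq_comm] using ha'
    have hsqrt : Real.sqrt d ^ 4 = d ^ 2 := by
      rw [show 4 = 2 * 2 by rfl, pow_mul, Real.sq_sqrt (Nat.cast_nonneg d)]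
    simp only [h a b a', hne, false_and, if_false, Finset.sum_const, Finset.card_univ,
      Fintype.card_fin, div_pow, one_pow, hsqrt, nsmul_eq_mul]
    field_simp
  rw [Fintype.sum_eq_add_sum_compl a, Finset.sum_congr rfl hfar]
  simp [h a b a, Finset.card_compl]
  field_simp
  norm_num

lemma secondMoment_eq_one_add_kroneckerSwap (h : IsCompleteMUB ψ) :
    secondMoment (fun p : Fin (d + 1) × Fin d => ψ p.1 p.2) = 1 + kroneckerSwap (Fin d) ℂ := by
  refine Matrix.secondMoment_eq_one_add_kroneckerSwap (fun p => h.star_dotProduct_self p.1 p.2)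
    (by simp [mul_comm]) ?_
  simp [Fintype.sum_prod_type, h.sum_sum_norm_star_dotProduct_pow_four]
  ring

end IsCompleteMUB

theorem mub_sum_eq_trace_mul_add_trace_mul_trace
    (d : ℕ) (ψ : Fin (d + 1) → Fin d → (Fin d → ℂ))
    (hMUB : ∀ a b a' b', ‖star (ψ a b) ⬝ᵥ ψ a' b'‖ =
      if a = a' ∧ b = b' then 1 else if a = a' then 0 else 1 / Real.sqrt d)
    (M N : Matrix (Fin d) (Fin d) ℂ) :
    ∑ a : Fin (d + 1), ∑ b : Fin d,
      (star (ψ a b) ⬝ᵥ (M *ᵥ ψ a b)) * (star (ψ a b) ⬝ᵥ (N *ᵥ ψ a b))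
      = (M * N).trace + M.trace * N.trace := by
  rw [← Fintype.sum_prod_type', sum_star_dotProduct_mulVec_mul_eq_trace_kronecker_mul_secondMoment,
    IsCompleteMUB.secondMoment_eq_one_add_kroneckerSwap hMUB, mul_add, mul_one, trace_add,
    trace_kronecker, trace_mul_comm, trace_kroneckerSwap_mul_kronecker, add_comm]
end

section
/- Given a complete set of d+1 mutually unbiased bases of ℂ^d, the subspaces W_a = { Σ_b r_b |ψ^a_b⟩⟨ψ^a_b| : r_b ∈ ℝ, Σ_b r_b = 0 } for a = 0,…,d are pairwise orthogonal (with respect to the Hilbert–Schmidt inner product) and their direct sum is the space W of all traceless Hermitian operators on ℂ^d. -/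
open Matrix BigOperators

/-- Membership in the subspace `W_a` attached to the `a`-th mutually unbiased basis:
real traceless combinations of the rank-one projectors onto the basis states. -/
def mubW (d : ℕ) (ψ : Fin (d + 1) → Fin d → (Fin d → ℂ)) (a : Fin (d + 1))
    (X : Matrix (Fin d) (Fin d) ℂ) : Prop :=
  ∃ r : Fin d → ℝ, (∑ b, r b) = 0 ∧
    X = ∑ b, (r b : ℂ) • Matrix.vecMulVec (ψ a b) (star (ψ a b))

/-!
The rank-one projectors `P a b = |ψ a b⟩⟨ψ a b|` satisfy `tr (P a b * P a' b') = δ b b'` for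
`a = a'` and `1 / d` otherwise. This gives the orthogonality of the `W_a` at once. It also shows
that every linear relation `∑ c a b • P a b = 0` has coefficients constant in `b`, while the
all-ones relation fails since `∑ b, P a b = 1`; so the relations form a space of dimension at most
`d`, and the `d (d + 1)` projectors span all `d × d` matrices. Testing against them yields
`∑ a b, tr (P a b * X) • P a b = X + tr X • 1`, and for `X` Hermitian and traceless the inner sums
over `b` lie in the `W_a`. Uniqueness holds because a vanishing sum of pairwise orthogonal
Hermitian matrices has vanishing terms.
-/

namespace MUB

open scoped ComplexOrder

section Proj

variable {n : Type*}

def proj (v : n → ℂ) : Matrix n n ℂ := vecMulVec v (star v)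

lemma proj_isHermitian (v : n → ℂ) : (proj v).IsHermitian := by
  simp [proj, IsHermitian, conjTranspose_vecMulVec]

lemma trace_proj_mul_proj [Fintype n] (u v : n → ℂ) :
    (proj u * proj v).trace = ((‖star u ⬝ᵥ v‖ ^ 2 : ℝ) : ℂ) := by
  rw [proj, proj, vecMulVec_mul_vecMulVec, trace_vecMulVec, dotProduct_smul, dotProduct_star,
    dotProduct_comm v, smul_eq_mul, Complex.star_def, Complex.mul_conj, Complex.normSq_eq_norm_sq,
    Complex.ofReal_pow]

lemma sum_proj_eq_one [Fintype n] [DecidableEq n] (v : n → n → ℂ)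
    (hv : ∀ i j, star (v i) ⬝ᵥ v j = if i = j then 1 else 0) : ∑ i, proj (v i) = 1 := by
  set V : Matrix n n ℂ := of fun k i => v i k
  have hVV : Vᴴ * V = 1 := by
    ext i j
    simpa [mul_apply, one_apply, dotProduct, V] using hv i j
  calc ∑ i, proj (v i) = V * Vᴴ := by
        ext j k
        simp [proj, Matrix.sum_apply, mul_apply, vecMulVec_apply, V]
    _ = 1 := mul_eq_one_comm.mp hVV

lemma ofReal_re_trace_mul_of_isHermitian [Fintype n] {A B : Matrix n n ℂ} (hA : A.IsHermitian)
    (hB : B.IsHermitian) : (((A * B).trace.re : ℝ) : ℂ) = (A * B).trace := by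
  rw [← Complex.conj_eq_iff_re, ← Complex.star_def, ← trace_conjTranspose, conjTranspose_mul,
    hA.eq, hB.eq, trace_mul_comm]

lemma eq_zero_of_trace_mul_eq_zero [Fintype n] {ι : Type*} {v : ι → Matrix n n ℂ}
    (hv : Submodule.span ℂ (Set.range v) = ⊤) {Y : Matrix n n ℂ}
    (hY : ∀ i, (v i * Y).trace = 0) : Y = 0 := by
  have hzero : traceLinearMap n ℂ ℂ ∘ₗ LinearMap.mulRight ℂ Y = 0 :=
    LinearMap.ext_on_range hv hY
  rw [← trace_conjTranspose_mul_self_eq_zero_iff]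
  exact LinearMap.congr_fun hzero Yᴴ

lemma eq_zero_of_sum_eq_zero_of_trace_mul_eq_zero [Fintype n] {ι : Type*} [Fintype ι]
    {Δ : ι → Matrix n n ℂ} (hΔ : ∀ i, (Δ i).IsHermitian)
    (horth : ∀ i j, i ≠ j → (Δ i * Δ j).trace = 0) (hsum : ∑ i, Δ i = 0) (i : ι) : Δ i = 0 := by
  rw [← trace_conjTranspose_mul_self_eq_zero_iff, (hΔ i).eq]
  calc (Δ i * Δ i).trace = (Δ i * ∑ j, Δ j).trace := by
        rw [Finset.mul_sum, trace_sum,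
          Finset.sum_eq_single i (fun j _ hj => horth i j hj.symm) (by simp)]
    _ = 0 := by rw [hsum, mul_zero, trace_zero]

end Proj

variable {d : ℕ}

lemma mubW_iff {ψ : Fin (d + 1) → Fin d → Fin d → ℂ} {a : Fin (d + 1)}
    {X : Matrix (Fin d) (Fin d) ℂ} :
    mubW d ψ a X ↔ ∃ r : Fin d → ℝ, ∑ b, r b = 0 ∧ X = ∑ b, (r b : ℂ) • proj (ψ a b) :=
  Iff.rfl

lemma isHermitian_of_mubW {ψ : Fin (d + 1) → Fin d → Fin d → ℂ} {a : Fin (d + 1)}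
    {X : Matrix (Fin d) (Fin d) ℂ} (hX : mubW d ψ a X) : X.IsHermitian := by
  obtain ⟨r, -, rfl⟩ := mubW_iff.mp hX
  exact isSelfAdjoint_sum _ fun b _ =>
    (proj_isHermitian (ψ a b)).smul (Complex.conj_ofReal (r b))

lemma mubW_sub {ψ : Fin (d + 1) → Fin d → Fin d → ℂ} {a : Fin (d + 1)}
    {X Y : Matrix (Fin d) (Fin d) ℂ} (hX : mubW d ψ a X) (hY : mubW d ψ a Y) :
    mubW d ψ a (X - Y) := by
  obtain ⟨r, hr, rfl⟩ := mubW_iff.mp hX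
  obtain ⟨s, hs, rfl⟩ := mubW_iff.mp hY
  refine mubW_iff.mpr ⟨r - s, by simp [Finset.sum_sub_distrib, hr, hs], ?_⟩
  simp [← Finset.sum_sub_distrib, sub_smul]

def IsCompleteMUB (ψ : Fin (d + 1) → Fin d → Fin d → ℂ) : Prop :=
  ∀ a b a' b', ‖star (ψ a b) ⬝ᵥ ψ a' b'‖ =
    if a = a' ∧ b = b' then 1 else if a = a' then 0 else 1 / Real.sqrt d

namespace IsCompleteMUB

variable {ψ : Fin (d + 1) → Fin d → Fin d → ℂ} (hψ : IsCompleteMUB ψ)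
include hψ

lemma star_dotProduct (a : Fin (d + 1)) (b b' : Fin d) :
    star (ψ a b) ⬝ᵥ ψ a b' = if b = b' then 1 else 0 := by
  have h := hψ a b a b'
  simp only [true_and, if_true] at h
  split_ifs at h ⊢ with hb
  · subst hb
    rw [← Complex.norm_of_nonneg' (dotProduct_star_self_nonneg _), h, Complex.ofReal_one]
  · exact norm_eq_zero.mp h

lemma trace_proj (a : Fin (d + 1)) (b : Fin d) : (proj (ψ a b)).trace = 1 := by
  rw [proj, trace_vecMulVec, dotProduct_comm, hψ.star_dotProduct, if_pos rfl]

lemma trace_proj_mul_proj (a a' : Fin (d + 1)) (b b' : Fin d) :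
    (proj (ψ a b) * proj (ψ a' b')).trace =
      if a = a' then (if b = b' then 1 else 0) else (d : ℂ)⁻¹ := by
  rw [MUB.trace_proj_mul_proj, hψ a b a' b']
  split_ifs <;> simp_all [Real.sq_sqrt (Nat.cast_nonneg d)]

lemma sum_proj (a : Fin (d + 1)) : ∑ b, proj (ψ a b) = 1 :=
  sum_proj_eq_one (ψ a) (hψ.star_dotProduct a)

lemma sum_trace_proj_mul (a : Fin (d + 1)) (X : Matrix (Fin d) (Fin d) ℂ) :
    ∑ b, (proj (ψ a b) * X).trace = X.trace := by
  rw [← trace_sum, ← Finset.sum_mul, hψ.sum_proj, one_mul]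

lemma trace_proj_mul_sum (c : Fin (d + 1) → Fin d → ℂ) (a' : Fin (d + 1)) (b' : Fin d) :
    (proj (ψ a' b') * ∑ a, ∑ b, c a b • proj (ψ a b)).trace =
      c a' b' + (d : ℂ)⁻¹ * (∑ a, ∑ b, c a b - ∑ b, c a' b) := by
  simp only [Finset.mul_sum, mul_smul_comm, trace_sum, trace_smul, hψ.trace_proj_mul_proj,
    smul_eq_mul]
  have hrow : ∀ a, ∑ b, c a b * (if a' = a then (if b' = b then 1 else 0) else (d : ℂ)⁻¹) =
      (d : ℂ)⁻¹ * ∑ b, c a b + if a' = a then c a' b' - (d : ℂ)⁻¹ * ∑ b, c a' b else 0 := by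
    intro a
    by_cases ha : a' = a
    · subst ha
      simp
    · simp [ha, Finset.sum_mul, mul_comm]
  rw [Finset.sum_congr rfl fun a _ => hrow a, Finset.sum_add_distrib, ← Finset.mul_sum,
    Finset.sum_ite_eq Finset.univ a', if_pos (Finset.mem_univ a')]
  ring

lemma eq_of_sum_smul_proj_eq_zero {c : Fin (d + 1) → Fin d → ℂ}
    (hc : ∑ a, ∑ b, c a b • proj (ψ a b) = 0) (a : Fin (d + 1)) (b b' : Fin d) :
    c a b = c a b' := by
  have hpair := fun b => hψ.trace_proj_mul_sum c a b
  simp only [hc, mul_zero, trace_zero] at hpair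
  linear_combination hpair b' - hpair b

lemma span_range_proj :
    Submodule.span ℂ (Set.range fun p : Fin (d + 1) × Fin d => proj (ψ p.1 p.2)) = ⊤ := by
  rcases Nat.eq_zero_or_pos d with rfl | hd
  · exact Subsingleton.elim _ _
  rw [← Fintype.range_linearCombination]
  set L := Fintype.linearCombination ℂ fun p : Fin (d + 1) × Fin d => proj (ψ p.1 p.2)
  set Q : (Fin (d + 1) → ℂ) →ₗ[ℂ] Fin (d + 1) × Fin d → ℂ := LinearMap.funLeft ℂ ℂ Prod.fst
  have hker : LinearMap.ker L < LinearMap.range Q := by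
    refine SetLike.lt_iff_le_and_exists.mpr ⟨fun z hz => ?_, ?_⟩
    · have hc : ∑ a, ∑ b, z (a, b) • proj (ψ a b) = 0 := by
        rw [← Fintype.sum_prod_type']
        exact hz
      exact ⟨fun a => z (a, ⟨0, hd⟩),
        funext fun p => hψ.eq_of_sum_smul_proj_eq_zero hc p.1 _ p.2⟩
    · refine ⟨fun _ => 1, LinearMap.mem_range.mpr ⟨fun _ => 1, rfl⟩, fun h => ?_⟩
      have htr := congrArg trace (LinearMap.mem_ker.mp h)
      simp [L, Fintype.linearCombination_apply, trace_sum, hψ.trace_proj,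
        Nat.cast_add_one_ne_zero, hd.ne'] at htr
  have h1 := Submodule.finrank_lt_finrank_of_lt hker
  have h2 := LinearMap.finrank_range_le Q
  have h3 := LinearMap.finrank_range_add_finrank_ker L
  apply Submodule.eq_top_of_finrank_eq
  apply le_antisymm (Submodule.finrank_le _)
  simp only [Module.finrank_matrix, Module.finrank_fintype_fun_eq_card, Fintype.card_prod,
    Fintype.card_fin, Module.finrank_self] at h1 h2 h3 ⊢
  nlinarith

lemma sum_trace_proj_mul_smul_proj (X : Matrix (Fin d) (Fin d) ℂ) :
    ∑ a, ∑ b, (proj (ψ a b) * X).trace • proj (ψ a b) = X + X.trace • 1 := by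
  rw [← sub_eq_zero]
  refine eq_zero_of_trace_mul_eq_zero hψ.span_range_proj fun ⟨a', b'⟩ => ?_
  have hd : (d : ℂ) ≠ 0 := Nat.cast_ne_zero.mpr b'.pos.ne'
  simp only [mul_sub, mul_add, trace_sub, trace_add, hψ.trace_proj_mul_sum, mul_smul_comm,
    mul_one, trace_smul, hψ.trace_proj, hψ.sum_trace_proj_mul, Finset.sum_const,
    Finset.card_univ, Fintype.card_fin, smul_eq_mul, nsmul_eq_mul]
  field_simp
  push_cast
  ring

lemma trace_proj_mul_eq_zero_of_mubW {a a' : Fin (d + 1)} (hne : a ≠ a')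
    {Y : Matrix (Fin d) (Fin d) ℂ} (hY : mubW d ψ a' Y) (b : Fin d) :
    (proj (ψ a b) * Y).trace = 0 := by
  obtain ⟨s, hs, rfl⟩ := mubW_iff.mp hY
  simp only [Finset.mul_sum, mul_smul_comm, trace_sum, trace_smul, hψ.trace_proj_mul_proj,
    if_neg hne, smul_eq_mul]
  rw [← Finset.sum_mul, ← Complex.ofReal_sum, hs, Complex.ofReal_zero, zero_mul]

lemma trace_mul_eq_zero_of_mubW {a a' : Fin (d + 1)} (hne : a ≠ a')
    {X Y : Matrix (Fin d) (Fin d) ℂ} (hX : mubW d ψ a X) (hY : mubW d ψ a' Y) :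
    (X * Y).trace = 0 := by
  obtain ⟨r, -, rfl⟩ := mubW_iff.mp hX
  simp [Finset.sum_mul, trace_sum, hψ.trace_proj_mul_eq_zero_of_mubW hne hY]

lemma mubW_sum_trace_proj_mul_smul_proj {X : Matrix (Fin d) (Fin d) ℂ} (hX : X.IsHermitian)
    (htr : X.trace = 0) (a : Fin (d + 1)) :
    mubW d ψ a (∑ b, (proj (ψ a b) * X).trace • proj (ψ a b)) := by
  have hreal (b : Fin d) : (((proj (ψ a b) * X).trace.re : ℝ) : ℂ) = (proj (ψ a b) * X).trace :=
    ofReal_re_trace_mul_of_isHermitian (proj_isHermitian _) hX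
  refine mubW_iff.mpr ⟨fun b => (proj (ψ a b) * X).trace.re, ?_, by simp only [hreal]⟩
  rw [← Complex.re_sum, hψ.sum_trace_proj_mul, htr, Complex.zero_re]

lemma eq_of_sum_eq_sum_of_mubW {f g : Fin (d + 1) → Matrix (Fin d) (Fin d) ℂ}
    (hf : ∀ a, mubW d ψ a (f a)) (hg : ∀ a, mubW d ψ a (g a)) (hfg : ∑ a, f a = ∑ a, g a) :
    f = g := by
  have hsub (a : Fin (d + 1)) : mubW d ψ a (f a - g a) := mubW_sub (hf a) (hg a)
  funext a
  refine sub_eq_zero.mp (eq_zero_of_sum_eq_zero_of_trace_mul_eq_zero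
    (fun a => isHermitian_of_mubW (hsub a))
    (fun a a' hne => hψ.trace_mul_eq_zero_of_mubW hne (hsub a) (hsub a')) ?_ a)
  rw [Finset.sum_sub_distrib, hfg, sub_self]

end IsCompleteMUB

end MUB

theorem mubW_orthogonal_and_directSum
    (d : ℕ) (ψ : Fin (d + 1) → Fin d → (Fin d → ℂ))
    (hMUB : ∀ a b a' b', ‖star (ψ a b) ⬝ᵥ ψ a' b'‖ =
      if a = a' ∧ b = b' then 1 else if a = a' then 0 else 1 / Real.sqrt d) :
    (∀ a a' : Fin (d + 1), a ≠ a' →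
      ∀ X Y : Matrix (Fin d) (Fin d) ℂ, mubW d ψ a X → mubW d ψ a' Y →
        (X * Y).trace = 0) ∧
    (∀ X : Matrix (Fin d) (Fin d) ℂ, X.IsHermitian → X.trace = 0 →
      ∃! f : Fin (d + 1) → Matrix (Fin d) (Fin d) ℂ,
        (∀ a, mubW d ψ a (f a)) ∧ X = ∑ a, f a) := by
  have hψ : MUB.IsCompleteMUB ψ := hMUB
  refine ⟨fun a a' hne X Y hX hY => hψ.trace_mul_eq_zero_of_mubW hne hX hY, fun X hX htr => ?_⟩
  have hf := hψ.mubW_sum_trace_proj_mul_smul_proj hX htr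
  have hsum : X = ∑ a, ∑ b, (MUB.proj (ψ a b) * X).trace • MUB.proj (ψ a b) := by
    rw [hψ.sum_trace_proj_mul_smul_proj, htr, zero_smul, add_zero]
  exact ⟨_, ⟨hf, hsum⟩, fun g hg => hψ.eq_of_sum_eq_sum_of_mubW hg.1 hf (hg.2.symm.trans hsum)⟩
end

section
/- For a complete set of d+1 mutually unbiased bases of ℂ^d, the map Π_a(V) = Σ_{b=0}^{d−1} |ψ^a_b⟩⟨ψ^a_b| V |ψ^a_b⟩⟨ψ^a_b| acts as the identity on W_a and annihilates W_{a'} for a' ≠ a; hence {Π_a} is a complete family of orthogonal projections of the traceless Hermitian operators W onto its subspaces W_a. -/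
open Matrix BigOperators

/-- The map `Π_a(V) = ∑_b ⟨ψ^a_b|V|ψ^a_b⟩ |ψ^a_b⟩⟨ψ^a_b|`. -/
noncomputable def mubProj (d : ℕ) (ψ : Fin (d + 1) → Fin d → (Fin d → ℂ))
    (a : Fin (d + 1)) (V : Matrix (Fin d) (Fin d) ℂ) : Matrix (Fin d) (Fin d) ℂ :=
  ∑ b, (star (ψ a b) ⬝ᵥ (V *ᵥ ψ a b)) • Matrix.vecMulVec (ψ a b) (star (ψ a b))

/-
The expectation value of a real combination `∑ r_b |v_b⟩⟨v_b|` in a vector `u` is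
`∑ r_b |⟨u|v_b⟩|²`. Applied to the MUB projectors, `Π_a` therefore multiplies
`|ψ^a_b⟩⟨ψ^a_b|` by `∑_{b'} r_{b'} |⟨ψ^a_b|ψ^{a'}_{b'}⟩|²`, which is `r_b` when
`a' = a` (orthonormality) and `(∑ r) / d = 0` when `a' ≠ a` (unbiasedness).
-/

section ExpectationValue

variable {𝕜 n ι : Type*} [RCLike 𝕜] [Fintype n] [Fintype ι]

theorem star_dotProduct_vecMulVec_mulVec (u v : n → 𝕜) :
    star u ⬝ᵥ (vecMulVec v (star v) *ᵥ u) = ((‖star u ⬝ᵥ v‖ ^ 2 : ℝ) : 𝕜) := by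
  rw [vecMulVec_mulVec, star_dotProduct (v := v), RCLike.ofReal_pow, ← RCLike.mul_conj]
  simp [dotProduct_comm, mul_comm]

theorem star_dotProduct_sum_smul_vecMulVec_mulVec (u : n → 𝕜) (r : ι → ℝ)
    (v : ι → n → 𝕜) :
    star u ⬝ᵥ ((∑ i, (r i : 𝕜) • vecMulVec (v i) (star (v i))) *ᵥ u)
      = ((∑ i, r i * ‖star u ⬝ᵥ v i‖ ^ 2 : ℝ) : 𝕜) := by
  simp only [sum_mulVec, dotProduct_sum, smul_mulVec, dotProduct_smul, smul_eq_mul,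
    star_dotProduct_vecMulVec_mulVec, RCLike.ofReal_sum, RCLike.ofReal_mul]

end ExpectationValue

theorem mubProj_sum_smul_vecMulVec (d : ℕ) (ψ : Fin (d + 1) → Fin d → (Fin d → ℂ))
    (a a' : Fin (d + 1)) (r : Fin d → ℝ) :
    mubProj d ψ a (∑ b', (r b' : ℂ) • vecMulVec (ψ a' b') (star (ψ a' b')))
      = ∑ b, ((∑ b', r b' * ‖star (ψ a b) ⬝ᵥ ψ a' b'‖ ^ 2 : ℝ) : ℂ) •
          vecMulVec (ψ a b) (star (ψ a b)) := by
  refine Finset.sum_congr rfl fun b _ => congrArg (· • _) ?_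
  exact star_dotProduct_sum_smul_vecMulVec_mulVec (𝕜 := ℂ) _ _ _

theorem mubProj_is_orthogonal_projection
    (d : ℕ) (ψ : Fin (d + 1) → Fin d → (Fin d → ℂ))
    (hMUB : ∀ a b a' b', ‖star (ψ a b) ⬝ᵥ ψ a' b'‖ =
      if a = a' ∧ b = b' then 1 else if a = a' then 0 else 1 / Real.sqrt d) :
    (∀ a X, mubW d ψ a X → mubProj d ψ a X = X) ∧
    (∀ a a' : Fin (d + 1), a ≠ a' → ∀ X, mubW d ψ a' X → mubProj d ψ a X = 0) := by
  constructor
  · rintro a X ⟨r, -, rfl⟩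
    rw [mubProj_sum_smul_vecMulVec]
    refine Finset.sum_congr rfl fun b _ => ?_
    have orthonormal :
        ∀ b', r b' * ‖star (ψ a b) ⬝ᵥ ψ a b'‖ ^ 2 = if b = b' then r b' else 0 := by
      intro b'
      split_ifs with hb <;> simp [hMUB, hb]
    simp only [orthonormal, Finset.sum_ite_eq, Finset.mem_univ, if_true]
  · rintro a a' hne X ⟨r, hr, rfl⟩
    rw [mubProj_sum_smul_vecMulVec]
    refine Finset.sum_eq_zero fun b _ => ?_
    have unbiased : ∀ b', ‖star (ψ a b) ⬝ᵥ ψ a' b'‖ ^ 2 = 1 / d := by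
      intro b'
      rw [hMUB, if_neg (fun h => hne h.1), if_neg hne, div_pow, one_pow,
        Real.sq_sqrt d.cast_nonneg]
    simp only [unbiased, ← Finset.sum_mul, hr, zero_mul, Complex.ofReal_zero, zero_smul]
end

section
/- Let p be an odd prime. The p+1 bases of ℂ^p consisting of the computational basis together with the bases B_a = {|ψ^a_b⟩ : b ∈ F_p} for a ∈ F_p, where |ψ^a_b⟩ = (1/√p) Σ_{x ∈ F_p} ω_p^{a x² + b x} |x⟩ with ω_p = e^{2πi/p}, form a complete set of p+1 mutually unbiased bases. -/
/-!
The computational basis meets each `ψ^a_b` in a single coordinate, of modulus `1/√p`. Within one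
family `a`, the inner product of `ψ^a_b` and `ψ^a_{b'}` is `1/p` times a sum of the character
`x ↦ ω^{(b'-b)x}`, hence `δ_{bb'}`. Across families `a ≠ a'` it is `1/p` times the quadratic sum
`S = ∑ₓ ω^{c x² + d x}` with `c = a' - a ≠ 0`, and `|S|² = p`: in `S · S̄` substitute `x = u + y`,
so that the summand becomes `ω^{c u² + d u} · ω^{2cuy}`; summing over `y` kills every `u ≠ 0` because
`2c` is invertible in odd characteristic.
-/

open BigOperators

/-- The states of the Klappenecker–Rötteler construction in odd prime dimension `p`:
`none` labels the computational basis, `some a` labels the basis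
`|ψ^a_b⟩ = (1/√p) ∑_x ω_p^{a x² + b x} |x⟩`. -/
noncomputable def mubState (p : ℕ) [NeZero p] (i : Option (ZMod p)) (b : ZMod p) :
    ZMod p → ℂ :=
  match i with
  | none => fun x => if x = b then 1 else 0
  | some a => fun x =>
      ((1 / Real.sqrt p : ℝ) : ℂ) *
        Complex.exp (2 * Real.pi * Complex.I / p) ^ (a * x ^ 2 + b * x).val

open Finset

namespace AddChar

variable {F : Type*} [Field F] [Fintype F] {ψ : AddChar F ℂ}

theorem sum_quadratic_mul_conj_sum_quadratic (hF : ringChar F ≠ 2) (hψ : ψ.IsPrimitive)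
    {c : F} (hc : c ≠ 0) (d : F) :
    (∑ x, ψ (c * x ^ 2 + d * x)) * starRingEnd ℂ (∑ x, ψ (c * x ^ 2 + d * x)) =
      Fintype.card F := by
  classical
  set q : F → F := fun x => c * x ^ 2 + d * x
  have shift (u y : F) : ψ (q (u + y) - q y) = ψ (q u) * ψ (y * (2 * c * u)) := by
    rw [← map_add_eq_mul]; congr 1; ring
  have h2c : (2 * c : F) ≠ 0 := mul_ne_zero (Ring.two_ne_zero hF) hc
  calc (∑ x, ψ (q x)) * starRingEnd ℂ (∑ y, ψ (q y))
      = ∑ y, ∑ x, ψ (q x - q y) := by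
        simp_rw [map_sum, ← map_neg_eq_conj, sum_mul_sum, ← map_add_eq_mul, ← sub_eq_add_neg]
        exact sum_comm
    _ = ∑ y, ∑ u, ψ (q u) * ψ (y * (2 * c * u)) := by
        refine sum_congr rfl fun y _ => ?_
        exact Fintype.sum_equiv (Equiv.addRight y).symm _ _ fun x => by simp [← shift]
    _ = ∑ u, ψ (q u) * if u = 0 then (Fintype.card F : ℂ) else 0 := by
        rw [sum_comm]
        refine sum_congr rfl fun u _ => ?_
        rw [← mul_sum, sum_mulShift _ hψ]
        simp [h2c]
    _ = Fintype.card F := by simp [q]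

theorem norm_sum_quadratic (hF : ringChar F ≠ 2) (hψ : ψ.IsPrimitive)
    {c : F} (hc : c ≠ 0) (d : F) :
    ‖∑ x, ψ (c * x ^ 2 + d * x)‖ = √(Fintype.card F) := by
  have h := congrArg Complex.re (sum_quadratic_mul_conj_sum_quadratic hF hψ hc d)
  rw [Complex.mul_conj, Complex.normSq_eq_norm_sq] at h
  rw [← Real.sqrt_sq (norm_nonneg _)]
  exact_mod_cast congrArg Real.sqrt h

end AddChar

lemma norm_sum_star_mul_comm {ι : Type*} [Fintype ι] (f g : ι → ℂ) :
    ‖∑ x, star (f x) * g x‖ = ‖∑ x, star (g x) * f x‖ := by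
  rw [← norm_star, star_sum]
  simp [mul_comm]

section mubState

variable {p : ℕ} [NeZero p]

lemma ZMod.cexp_pow_val_eq_stdAddChar (v : ZMod p) :
    Complex.exp (2 * Real.pi * Complex.I / p) ^ v.val = ZMod.stdAddChar v := by
  rw [ZMod.stdAddChar_apply, ZMod.toCircle_apply, ← Complex.exp_nat_mul]
  congr 1
  ring

lemma mubState_some (a b x : ZMod p) :
    mubState p (some a) b x = ((1 / √p : ℝ) : ℂ) * ZMod.stdAddChar (a * x ^ 2 + b * x) := by
  simp only [mubState, ZMod.cexp_pow_val_eq_stdAddChar]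

lemma norm_mubState_some (a b x : ZMod p) : ‖mubState p (some a) b x‖ = 1 / √p := by
  rw [mubState_some, norm_mul, AddChar.norm_apply, mul_one, Complex.norm_real, Real.norm_eq_abs,
    abs_of_nonneg (by positivity)]

lemma sum_star_mubState_none_mul (b : ZMod p) (f : ZMod p → ℂ) :
    ∑ x, star (mubState p none b x) * f x = f b := by
  simp [mubState]

lemma sum_star_mubState_some_mul_some (a a' b b' : ZMod p) :
    ∑ x, star (mubState p (some a) b x) * mubState p (some a') b' x =
      ((1 / p : ℝ) : ℂ) * ∑ x, ZMod.stdAddChar ((a' - a) * x ^ 2 + (b' - b) * x) := by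
  rw [mul_sum]
  refine sum_congr rfl fun x _ => ?_
  rw [mubState_some, mubState_some, star_mul', Complex.star_def, Complex.conj_ofReal,
    ← AddChar.map_neg_eq_conj, mul_mul_mul_comm, ← AddChar.map_add_eq_mul, ← Complex.ofReal_mul,
    div_mul_div_comm, one_mul, Real.mul_self_sqrt (Nat.cast_nonneg p)]
  congr 2
  ring

end mubState

lemma norm_sum_star_mubState_some_mul_some {p : ℕ} [Fact p.Prime] (hodd : p ≠ 2)
    (a a' b b' : ZMod p) :
    ‖∑ x, star (mubState p (some a) b x) * mubState p (some a') b' x‖ =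
      if a = a' ∧ b = b' then 1 else if a = a' then 0 else 1 / √p := by
  have hp_pos : (0 : ℝ) < p := Nat.cast_pos.2 (Fact.out : p.Prime).pos
  rw [sum_star_mubState_some_mul_some, norm_mul, Complex.norm_real, Real.norm_eq_abs,
    abs_of_nonneg (by positivity)]
  rcases eq_or_ne a a' with rfl | ha
  · simp_rw [sub_self, zero_mul, zero_add, mul_comm (b' - b)]
    rw [AddChar.sum_mulShift _ (ZMod.isPrimitive_stdAddChar p), ZMod.card]
    rcases eq_or_ne b b' with rfl | hb
    · simp [hp_pos.ne']
    · simp [sub_eq_zero, hb, hb.symm]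
  · have hF : ringChar (ZMod p) ≠ 2 := by rwa [ZMod.ringChar_zmod_n]
    rw [AddChar.norm_sum_quadratic hF (ZMod.isPrimitive_stdAddChar p) (sub_ne_zero.2 ha.symm),
      ZMod.card, if_neg (fun h => ha h.1), if_neg ha]
    field_simp
    rw [Real.sq_sqrt hp_pos.le]

theorem mub_construction_odd_prime (p : ℕ) [hp : Fact p.Prime] (hodd : p ≠ 2) :
    ∀ (i i' : Option (ZMod p)) (b b' : ZMod p),
      ‖∑ x : ZMod p, star (mubState p i b x) * mubState p i' b' x‖ =
        if i = i' ∧ b = b' then 1 else if i = i' then 0 else 1 / Real.sqrt p := by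
  rintro (_ | a) (_ | a') b b'
  · rw [sum_star_mubState_none_mul]
    by_cases h : b = b' <;> simp [mubState, h]
  · rw [sum_star_mubState_none_mul, norm_mubState_some]
    simp
  · rw [norm_sum_star_mul_comm, sum_star_mubState_none_mul, norm_mubState_some]
    simp
  · simpa using norm_sum_star_mubState_some_mul_some hodd a a' b b'
end

section
/- Let d = p₁^{α₁} ⋯ p_k^{α_k} be the prime factorization of d, and suppose for each i there exist m_i + 1 mutually unbiased bases of ℂ^{p_i^{α_i}} where m_i = p_i^{α_i}. Then ℂ^d admits at least min_i (p_i^{α_i} + 1) mutually unbiased bases, obtained as tensor products of bases with matching indices. -/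
/-! The overlap of two product vectors factors as the product of the overlaps of their factors,
and the tensor bases are indexed by a common label `j` shared by all factors. For equal labels
each factor is `1` or `0` (orthonormality); for different labels every factor has modulus
`1 / √(pᵢ^αᵢ)`, and these multiply to `1 / √d`. -/

open Matrix BigOperators

lemma sum_star_prod_mul_prod_eq_prod_dotProduct {R ι : Type*} [CommSemiring R] [StarRing R]
    [Fintype ι] [DecidableEq ι] {κ : ι → Type*} [∀ i, Fintype (κ i)] (u v : ∀ i, κ i → R) :
    ∑ x : ∀ i, κ i, starRingEnd R (∏ i, u i (x i)) * ∏ i, v i (x i)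
      = ∏ i, star (u i) ⬝ᵥ v i := by
  simp only [dotProduct, Pi.star_apply, Fintype.prod_sum, map_prod, ← Finset.prod_mul_distrib,
    starRingEnd_apply]

theorem mub_tensor_lower_bound
    {ι : Type*} [Fintype ι] [DecidableEq ι] [Nonempty ι] (n : ι → ℕ)
    (ψ : ∀ i, Fin (n i + 1) → Fin (n i) → (Fin (n i) → ℂ))
    (hMUB : ∀ i a b a' b', ‖star (ψ i a b) ⬝ᵥ ψ i a' b'‖ =
      if a = a' ∧ b = b' then 1 else if a = a' then 0 else 1 / Real.sqrt (n i)) :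
    ∀ (j j' : Fin (Finset.univ.inf' Finset.univ_nonempty (fun i => n i + 1)))
      (l l' : ∀ i, Fin (n i)),
      ‖(∑ x : ∀ i, Fin (n i),
          (starRingEnd ℂ
            (∏ i, ψ i (Fin.castLE (Finset.inf'_le _ (Finset.mem_univ i)) j) (l i) (x i))) *
          ∏ i, ψ i (Fin.castLE (Finset.inf'_le _ (Finset.mem_univ i)) j') (l' i) (x i))‖
      = if j = j' ∧ l = l' then 1 else if j = j' then 0
        else 1 / Real.sqrt (∏ i, (n i : ℝ)) := by
  intro j j' l l'
  rw [sum_star_prod_mul_prod_eq_prod_dotProduct, norm_prod]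
  simp only [hMUB, Fin.castLE_inj]
  by_cases hj : j = j'
  · simp only [hj, true_and, if_true, Fintype.prod_boole, funext_iff]
  · simp only [hj, false_and, if_false, Finset.prod_div_distrib, Finset.prod_const_one,
      Real.sqrt_prod _ fun i _ => Nat.cast_nonneg (n i)]
end

section
/- A finite subset X of unit vectors in ℂ^d satisfying (1/|X|²) Σ_{ψ,φ ∈ X} |⟨ψ|φ⟩|^{2k} = 1/C(d+k−1, k) for k = 0, 1, 2 whenever X consists of d(d+1) vectors forming d+1 mutually unbiased bases: indeed, a complete set of d+1 mutually unbiased bases satisfies these three moment equations (the k=1 sum equals 1/d and the k=2 sum equals 2/(d(d+1))). -/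
open Matrix BigOperators

/-! The overlaps `|⟨ψ|φ⟩|²` take only the values `1`, `0` and `1/d`, on `d(d+1)`, `d(d+1)(d-1)`
and `d³(d+1)` ordered pairs respectively, so each moment sum is an explicit function of `d`. -/

theorem Finset.sum_ite_and_ite_eq {α β R : Type*} [Fintype α] [DecidableEq α] [Fintype β]
    [DecidableEq β] [CommRing R] (x y z : R) :
    ∑ a : α, ∑ b : β, ∑ a' : α, ∑ b' : β,
        (if a = a' ∧ b = b' then x else if a = a' then y else z)
      = Fintype.card α * Fintype.card β * (x - y)
        + Fintype.card α * Fintype.card β ^ 2 * (y - z)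
        + (Fintype.card α * Fintype.card β) ^ 2 * z := by
  have hsplit : ∀ (a a' : α) (b b' : β),
      (if a = a' ∧ b = b' then x else if a = a' then y else z)
        = z + ((if a = a' then y - z else 0)
          + if a = a' then (if b = b' then x - y else 0) else 0) := by
    intro a a' b b'
    by_cases ha : a = a' <;> by_cases hb : b = b' <;> simp [ha, hb]
  simp only [hsplit, Finset.sum_add_distrib, Finset.sum_ite_irrel, Finset.sum_const_zero,
    Finset.sum_ite_eq, Finset.sum_const, Finset.mem_univ, if_true, Finset.card_univ,
    nsmul_eq_mul]
  ring

theorem mub_moment_equations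
    (d : ℕ) (hd : 0 < d) (ψ : Fin (d + 1) → Fin d → (Fin d → ℂ))
    (hMUB : ∀ a b a' b', ‖star (ψ a b) ⬝ᵥ ψ a' b'‖ =
      if a = a' ∧ b = b' then 1 else if a = a' then 0 else 1 / Real.sqrt d) :
    ∀ k : ℕ, k ≤ 2 →
      (1 / ((d * (d + 1) : ℝ)) ^ 2) *
        ∑ a : Fin (d + 1), ∑ b : Fin d, ∑ a' : Fin (d + 1), ∑ b' : Fin d,
          ‖star (ψ a b) ⬝ᵥ ψ a' b'‖ ^ (2 * k)
      = 1 / (Nat.choose (d + k - 1) k : ℝ) := by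
  intro k hk
  -- `0 ^ (2 * k)` is kept symbolic: for `k = 0` the orthogonal pairs contribute `1`, not `0`.
  have hoverlap : ∀ a b a' b', ‖star (ψ a b) ⬝ᵥ ψ a' b'‖ ^ (2 * k) =
      if a = a' ∧ b = b' then 1 else if a = a' then (0 : ℝ) ^ (2 * k) else (1 / d : ℝ) ^ k := by
    intro a b a' b'
    rw [hMUB]
    split_ifs <;> simp [pow_mul, Real.sq_sqrt]
  simp only [hoverlap, Finset.sum_ite_and_ite_eq, Fintype.card_fin]
  have hd0 : (d : ℝ) ≠ 0 := by positivity
  interval_cases k <;> simp [Nat.cast_choose_two] <;> field_simp <;> ring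
end

section
/- Let A be a unitary on a Hilbert space and |ψ⟩ = A|0⟩ = sin θ |ψ_good⟩ + cos θ |ψ_bad⟩ with |ψ_good⟩ ⊥ |ψ_bad⟩ both unit vectors. Let U_bad⊥ be the reflection fixing |ψ_bad⟩ and negating its orthogonal complement restricted to the span, and U_{|ψ⟩}⊥ = A U_{|0⟩}⊥ A† the reflection about |ψ⟩. Then the amplitude amplification operator Q = U_{|ψ⟩}⊥ U_bad⊥ satisfies Q^k |ψ⟩ = sin((2k+1)θ)|ψ_good⟩ + cos((2k+1)θ)|ψ_bad⟩ for all k ≥ 0. -/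
/-!
Both operators act on the real plane spanned by the good and bad states, where the state at angle
`φ` is `sin φ • g + cos φ • b`. The bad reflection sends angle `φ` to `-φ` and the reflection
about `|ψ⟩` sends `φ` to `2θ - φ`, so `Q` is the rotation `φ ↦ φ + 2θ`; starting from `|ψ⟩` at
angle `θ`, after `k` steps the angle is `(2k + 1)θ`.
-/

namespace AmplitudeAmplification

variable {M : Type*} [AddCommGroup M] [Module ℂ M]

noncomputable def planeState (g b : M) (φ : ℝ) : M :=
  (Real.sin φ : ℂ) • g + (Real.cos φ : ℂ) • b

theorem pow_apply_of_apply_eq_add {R N : Type*} [Semiring R] [AddCommMonoid N] [Module R N]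
    (Q : Module.End R N) (v : ℝ → N) (α : ℝ) (hQ : ∀ φ, Q (v φ) = v (φ + α)) (φ : ℝ) :
    ∀ k : ℕ, (Q ^ k) (v φ) = v (φ + k * α)
  | 0 => by simp
  | k + 1 => by
    rw [pow_succ', Module.End.mul_apply, pow_apply_of_apply_eq_add Q v α hQ φ k, hQ]
    push_cast
    ring_nf

theorem apply_planeState_neg {g b : M} {Ubad : Module.End ℂ M}
    (hUbad : ∀ φ : ℝ, Ubad (planeState g b φ) = -((Real.sin φ : ℂ) • g) + (Real.cos φ : ℂ) • b)
    (φ : ℝ) : Ubad (planeState g b φ) = planeState g b (-φ) := by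
  rw [hUbad, planeState, Real.sin_neg, Real.cos_neg, Complex.ofReal_neg, neg_smul]

theorem mul_apply_planeState {g b : M} {θ : ℝ} {Ubad Upsi : Module.End ℂ M}
    (hUbad : ∀ φ : ℝ, Ubad (planeState g b φ) = planeState g b (-φ))
    (hUpsi : ∀ φ : ℝ, Upsi (planeState g b φ) = planeState g b (2 * θ - φ)) (φ : ℝ) :
    (Upsi * Ubad) (planeState g b φ) = planeState g b (φ + 2 * θ) := by
  rw [Module.End.mul_apply, hUbad, hUpsi]
  ring_nf

end AmplitudeAmplification

open AmplitudeAmplification in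
theorem amplitude_amplification_general
    {H : Type*} [NormedAddCommGroup H] [InnerProductSpace ℂ H]
    (g b : H)
    (θ : ℝ) (Ubad Upsi : Module.End ℂ H)
    -- `U_bad⊥` reflects about `|ψ_bad⟩` in the plane spanned by the good and bad states
    (hUbad : ∀ φ : ℝ,
      Ubad ((Real.sin φ : ℂ) • g + (Real.cos φ : ℂ) • b) =
        -((Real.sin φ : ℂ) • g) + (Real.cos φ : ℂ) • b)
    -- `U_{|ψ⟩}⊥ = A U_{|0⟩}⊥ A†` reflects about `|ψ⟩ = sin θ |ψ_good⟩ + cos θ |ψ_bad⟩`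
    (hUpsi : ∀ φ : ℝ,
      Upsi ((Real.sin φ : ℂ) • g + (Real.cos φ : ℂ) • b) =
        (Real.sin (2 * θ - φ) : ℂ) • g + (Real.cos (2 * θ - φ) : ℂ) • b) :
    ∀ k : ℕ,
      ((Upsi * Ubad) ^ k) ((Real.sin θ : ℂ) • g + (Real.cos θ : ℂ) • b) =
        (Real.sin ((2 * k + 1) * θ) : ℂ) • g + (Real.cos ((2 * k + 1) * θ) : ℂ) • b := by
  intro k
  have hQ := mul_apply_planeState (apply_planeState_neg hUbad) hUpsi
  have h := pow_apply_of_apply_eq_add _ _ _ hQ θ k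
  rwa [show θ + k * (2 * θ) = (2 * k + 1) * θ by ring] at h

theorem amplitude_amplification
    {H : Type*} [NormedAddCommGroup H] [InnerProductSpace ℂ H]
    (g b : H) (hg : ‖g‖ = 1) (hb : ‖b‖ = 1) (hgb : inner (𝕜 := ℂ) g b = 0)
    (θ : ℝ) (Ubad Upsi : Module.End ℂ H)
    -- `U_bad⊥` reflects about `|ψ_bad⟩` in the plane spanned by the good and bad states
    (hUbad : ∀ φ : ℝ,
      Ubad ((Real.sin φ : ℂ) • g + (Real.cos φ : ℂ) • b) =
        -((Real.sin φ : ℂ) • g) + (Real.cos φ : ℂ) • b)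
    -- `U_{|ψ⟩}⊥ = A U_{|0⟩}⊥ A†` reflects about `|ψ⟩ = sin θ |ψ_good⟩ + cos θ |ψ_bad⟩`
    (hUpsi : ∀ φ : ℝ,
      Upsi ((Real.sin φ : ℂ) • g + (Real.cos φ : ℂ) • b) =
        (Real.sin (2 * θ - φ) : ℂ) • g + (Real.cos (2 * θ - φ) : ℂ) • b) :
    ∀ k : ℕ,
      ((Upsi * Ubad) ^ k) ((Real.sin θ : ℂ) • g + (Real.cos θ : ℂ) • b) =
        (Real.sin ((2 * k + 1) * θ) : ℂ) • g + (Real.cos ((2 * k + 1) * θ) : ℂ) • b :=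
  amplitude_amplification_general g b θ Ubad Upsi hUbad hUpsi
end

section
/- For any linear operators M, N on ℂ^d, the integral over the Fubini–Study measure of ⟨ψ|M|ψ⟩⟨ψ|N|ψ⟩ equals (tr(MN) + tr M · tr N) / (d(d+1)). -/
open MeasureTheory BigOperators

set_option linter.unusedSectionVars false
set_option maxHeartbeats 1000000

section FSaux

variable {d : ℕ} [MeasurableSpace (EuclideanSpace ℂ (Fin d))]
  [BorelSpace (EuclideanSpace ℂ (Fin d))]
  (μ : Measure (EuclideanSpace ℂ (Fin d))) [IsProbabilityMeasure μ]

/-- basic invariance of integrals under unitaries -/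
lemma FS.int_inv (hinv : ∀ U : EuclideanSpace ℂ (Fin d) ≃ₗᵢ[ℂ] EuclideanSpace ℂ (Fin d),
      μ.map U = μ) (U : EuclideanSpace ℂ (Fin d) ≃ₗᵢ[ℂ] EuclideanSpace ℂ (Fin d))
    (f : EuclideanSpace ℂ (Fin d) → ℂ) :
    ∫ ψ, f (U ψ) ∂μ = ∫ ψ, f ψ ∂μ := by
  conv_rhs => rw [← hinv U]
  exact (MeasureTheory.integral_map_equiv (U.toHomeomorph.toMeasurableEquiv) f).symm

/-- coordinate bound -/
lemma FS.coord_le (ψ : EuclideanSpace ℂ (Fin d)) (i : Fin d) : ‖ψ i‖ ≤ ‖ψ‖ := by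
  have h := EuclideanSpace.norm_eq ψ
  rw [h]
  have h2 : ‖ψ i‖ = Real.sqrt (‖ψ i‖^2) := (Real.sqrt_sq (norm_nonneg _)).symm
  rw [h2]
  apply Real.sqrt_le_sqrt
  exact Finset.single_le_sum (f := fun j => ‖ψ j‖^2) (fun j _ => sq_nonneg _) (Finset.mem_univ i)

/-- the quartic monomial -/
def FS.mono (i j k l : Fin d) (ψ : EuclideanSpace ℂ (Fin d)) : ℂ :=
  (starRingEnd ℂ) (ψ i) * ψ j * ((starRingEnd ℂ) (ψ k) * ψ l)

lemma FS.mono_cont (i j k l : Fin d) : Continuous (FS.mono i j k l) := by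
  have hc : ∀ m : Fin d, Continuous fun ψ : EuclideanSpace ℂ (Fin d) => ψ m :=
    fun m => (EuclideanSpace.proj (𝕜 := ℂ) m).continuous
  exact (((Complex.continuous_conj.comp (hc i)).mul (hc j)).mul
    ((Complex.continuous_conj.comp (hc k)).mul (hc l)))

lemma FS.mono_integrable (hsphere : ∀ᵐ ψ ∂μ, ‖ψ‖ = 1) (i j k l : Fin d) :
    Integrable (FS.mono i j k l) μ := by
  apply Integrable.mono' (integrable_const (1 : ℝ)) (FS.mono_cont i j k l).aestronglyMeasurable
  filter_upwards [hsphere] with ψ hψ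
  have hb : ∀ m : Fin d, ‖ψ m‖ ≤ 1 := fun m => hψ ▸ FS.coord_le ψ m
  simp only [FS.mono, norm_mul]
  calc ‖(starRingEnd ℂ) (ψ i)‖ * ‖ψ j‖ * (‖(starRingEnd ℂ) (ψ k)‖ * ‖ψ l‖)
      ≤ 1 * 1 * (1 * 1) := by
        gcongr <;> simp only [RCLike.norm_conj] <;> exact hb _
    _ = 1 := by norm_num

/-- existence of a distinguishing coordinate -/
lemma FS.exists_m {α : Type*} [DecidableEq α] {i j k l : α}
    (h1 : ¬(j = i ∧ l = k)) (h2 : ¬(j = k ∧ l = i)) :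
    ∃ m, ((if j = m then 1 else 0) + (if l = m then 1 else 0) : ℕ) ≠
      (if i = m then 1 else 0) + (if k = m then 1 else 0) := by
  by_cases hji : j = i
  · have hlk : l ≠ k := fun h => h1 ⟨hji, h⟩
    refine ⟨l, ?_⟩
    subst hji
    have h2' : ¬ k = l := fun h => hlk h.symm
    simp [h2']
  · by_cases hjk : j = k
    · have hli : l ≠ i := fun h => h2 ⟨hjk, h⟩
      refine ⟨l, ?_⟩
      subst hjk
      have h2' : ¬ i = l := fun h => hli h.symm
      simp [h2']
    · refine ⟨j, ?_⟩
      have h1' : ¬ i = j := fun h => hji h.symm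
      have h2' : ¬ k = j := fun h => hjk h.symm
      simp [h1', h2']

/-- multiplication by a unit complex number, as a ℂ-linear isometry of ℂ -/
noncomputable def FS.phase (c : ℂ) (hc : ‖c‖ = 1) : ℂ ≃ₗᵢ[ℂ] ℂ where
  toLinearEquiv :=
  { toFun := fun z => c * z
    map_add' := by intro x y; ring
    map_smul' := by intro m x; simp; ring
    invFun := fun z => c⁻¹ * z
    left_inv := by
      intro z
      have : c ≠ 0 := by intro h; rw [h] at hc; simp at hc
      field_simp
    right_inv := by
      intro z
      have : c ≠ 0 := by intro h; rw [h] at hc; simp at hc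
      field_simp }
  norm_map' := by intro z; simp [hc]

/-- the diagonal unitary that multiplies coordinate m by c -/
noncomputable def FS.diag (m : Fin d) (c : ℂ) (hc : ‖c‖ = 1) :
    EuclideanSpace ℂ (Fin d) ≃ₗᵢ[ℂ] EuclideanSpace ℂ (Fin d) :=
  LinearIsometryEquiv.piLpCongrRight 2
    (fun i => if i = m then FS.phase c hc else LinearIsometryEquiv.refl ℂ ℂ)

lemma FS.diag_apply (m : Fin d) (c : ℂ) (hc : ‖c‖ = 1)
    (ψ : EuclideanSpace ℂ (Fin d)) (i : Fin d) :
    FS.diag m c hc ψ i = if i = m then c * ψ i else ψ i := by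
  simp only [FS.diag, LinearIsometryEquiv.piLpCongrRight_apply]
  by_cases h : i = m <;> simp [h, FS.phase]

/-- unbalanced monomials integrate to zero -/
lemma FS.vanish (hinv : ∀ U : EuclideanSpace ℂ (Fin d) ≃ₗᵢ[ℂ] EuclideanSpace ℂ (Fin d),
      μ.map U = μ) {i j k l : Fin d}
    (h1 : ¬(j = i ∧ l = k)) (h2 : ¬(j = k ∧ l = i)) :
    ∫ ψ, FS.mono i j k l ψ ∂μ = 0 := by
  obtain ⟨m, hm⟩ := FS.exists_m h1 h2
  have hI : ‖Complex.I‖ = 1 := by simp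
  set U := FS.diag m Complex.I hI with hU
  set c : ℂ := (if j = m then Complex.I else 1) * (if l = m then Complex.I else 1) *
      ((if i = m then -Complex.I else 1) * (if k = m then -Complex.I else 1)) with hc
  have key : ∀ ψ, FS.mono i j k l (U ψ) = c * FS.mono i j k l ψ := by
    intro ψ
    simp only [FS.mono, hU, FS.diag_apply, hc]
    split_ifs <;> (try simp only [map_mul, Complex.conj_I]) <;> ring
  have h0 : c * ∫ ψ, FS.mono i j k l ψ ∂μ = ∫ ψ, FS.mono i j k l ψ ∂μ := by
    rw [← integral_const_mul]
    simp_rw [← key]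
    exact FS.int_inv μ hinv U _
  have hfac : c ≠ 1 := by
    rw [hc]
    by_cases hi : i = m <;> by_cases hj : j = m <;> by_cases hk : k = m <;> by_cases hl : l = m <;>
      simp_all <;> simp_all [Complex.ext_iff] <;> norm_num
  have h2' : (c - 1) * ∫ ψ, FS.mono i j k l ψ ∂μ = 0 := by
    rw [sub_mul, h0]; ring
  rcases mul_eq_zero.mp h2' with h | h
  · exact absurd (by linear_combination h : c = 1) hfac
  · exact h

/-- permutation invariance -/
lemma FS.perm_inv (hinv : ∀ U : EuclideanSpace ℂ (Fin d) ≃ₗᵢ[ℂ] EuclideanSpace ℂ (Fin d),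
      μ.map U = μ) (σ : Equiv.Perm (Fin d)) (i j k l : Fin d) :
    ∫ ψ, FS.mono (σ i) (σ j) (σ k) (σ l) ψ ∂μ = ∫ ψ, FS.mono i j k l ψ ∂μ := by
  set U := LinearIsometryEquiv.piLpCongrLeft 2 ℂ ℂ σ with hUdef
  have key : ∀ ψ, FS.mono (σ i) (σ j) (σ k) (σ l) (U ψ) = FS.mono i j k l ψ := by
    intro ψ
    have hx : ∀ x : Fin d, U ψ (σ x) = ψ x := by
      intro x
      simp only [hUdef, LinearIsometryEquiv.piLpCongrLeft_apply, Equiv.piCongrLeft'_apply,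
        Equiv.symm_apply_apply]
    simp only [FS.mono, hx]
  rw [← FS.int_inv μ hinv U (FS.mono (σ i) (σ j) (σ k) (σ l))]
  simp_rw [key]

/-- the Hadamard transform on coordinates i,k, as a bare function -/
noncomputable def FS.hadFun (i k : Fin d) (ψ : EuclideanSpace ℂ (Fin d)) :
    EuclideanSpace ℂ (Fin d) :=
  WithLp.toLp 2 fun n => if n = i then (ψ i + ψ k) / (Real.sqrt 2 : ℝ)
    else if n = k then (ψ i - ψ k) / (Real.sqrt 2 : ℝ) else ψ n

lemma FS.s2 : ((Real.sqrt 2 : ℝ) : ℂ) ^ 2 = 2 := by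
  rw [← Complex.ofReal_pow, Real.sq_sqrt (by norm_num)]
  norm_num

lemma FS.s2ne : ((Real.sqrt 2 : ℝ) : ℂ) ≠ 0 := by
  simp [Real.sqrt_eq_zero']

lemma FS.hadFun_invol (i k : Fin d) (hik : i ≠ k) (ψ : EuclideanSpace ℂ (Fin d)) :
    FS.hadFun i k (FS.hadFun i k ψ) = ψ := by
  have hki : ¬ k = i := fun h => hik h.symm
  have outeri : ∀ X : EuclideanSpace ℂ (Fin d),
      FS.hadFun i k X i = (X i + X k) / ((Real.sqrt 2 : ℝ) : ℂ) := fun X => by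
    simp [FS.hadFun]
  have outerk : ∀ X : EuclideanSpace ℂ (Fin d),
      FS.hadFun i k X k = (X i - X k) / ((Real.sqrt 2 : ℝ) : ℂ) := fun X => by
    simp [FS.hadFun, hki]
  ext n
  by_cases hni : n = i
  · subst hni
    rw [outeri, outeri, outerk, ← add_div, div_div, ← pow_two, FS.s2]
    ring
  · by_cases hnk : n = k
    · subst hnk
      rw [outerk, outeri, outerk, ← sub_div, div_div, ← pow_two, FS.s2]
      ring
    · simp [FS.hadFun, hni, hnk]

/-- the Hadamard transform as a unitary -/
noncomputable def FS.had (i k : Fin d) (hik : i ≠ k) :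
    EuclideanSpace ℂ (Fin d) ≃ₗᵢ[ℂ] EuclideanSpace ℂ (Fin d) where
  toLinearEquiv :=
  { toFun := FS.hadFun i k
    invFun := FS.hadFun i k
    left_inv := FS.hadFun_invol i k hik
    right_inv := FS.hadFun_invol i k hik
    map_add' := by
      intro x y
      ext n
      simp only [FS.hadFun, PiLp.add_apply, PiLp.toLp_apply]
      split_ifs <;> ring
    map_smul' := by
      intro c x
      ext n
      simp only [FS.hadFun, PiLp.toLp_apply, PiLp.smul_apply, smul_eq_mul, RingHom.id_apply]
      split_ifs <;> ring }
  norm_map' := by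
    intro ψ
    rw [EuclideanSpace.norm_eq, EuclideanSpace.norm_eq]
    congr 1
    show (∑ n, ‖FS.hadFun i k ψ n‖ ^ 2) = ∑ n, ‖ψ n‖ ^ 2
    have hsum : ∀ f : Fin d → ℝ, ∑ n, f n = f i + (f k + ∑ n ∈ (Finset.univ.erase i).erase k, f n) := by
      intro f
      rw [← Finset.add_sum_erase _ f (Finset.mem_univ i)]
      congr 1
      rw [← Finset.add_sum_erase _ f (Finset.mem_erase.mpr ⟨Ne.symm hik, Finset.mem_univ k⟩)]
    rw [hsum (fun n => ‖FS.hadFun i k ψ n‖ ^ 2), hsum (fun n => ‖ψ n‖ ^ 2)]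
    have hrest : ∑ n ∈ (Finset.univ.erase i).erase k, ‖FS.hadFun i k ψ n‖ ^ 2
        = ∑ n ∈ (Finset.univ.erase i).erase k, ‖ψ n‖ ^ 2 := by
      apply Finset.sum_congr rfl
      intro n hn
      have hnk : n ≠ k := (Finset.mem_erase.mp hn).1
      have hni : n ≠ i := (Finset.mem_erase.mp ((Finset.mem_erase.mp hn).2)).1
      simp [FS.hadFun, hni, hnk]
    rw [hrest]
    have hval : ‖FS.hadFun i k ψ i‖ ^ 2 + ‖FS.hadFun i k ψ k‖ ^ 2 = ‖ψ i‖ ^ 2 + ‖ψ k‖ ^ 2 := by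
      simp only [FS.hadFun, PiLp.toLp_apply, if_pos rfl, if_neg (Ne.symm hik), if_neg hik, eq_self_iff_true, if_true]
      have h2 : ∀ z : ℂ, ‖z / ((Real.sqrt 2 : ℝ) : ℂ)‖ ^ 2 = ‖z‖ ^ 2 / 2 := by
        intro z
        rw [norm_div, div_pow, Complex.norm_real, Real.norm_eq_abs,
          abs_of_nonneg (Real.sqrt_nonneg 2), Real.sq_sqrt (by norm_num : (2:ℝ) ≥ 0)]
      rw [h2, h2]
      have hnormsq : ∀ z : ℂ, ‖z‖ ^ 2 = z.re ^ 2 + z.im ^ 2 := by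
        intro z
        rw [Complex.sq_norm, Complex.normSq_apply]
        ring
      simp only [hnormsq, Complex.add_re, Complex.add_im, Complex.sub_re, Complex.sub_im]
      ring
    linarith [hval]

/-- the Hadamard relation: the off-diagonal second moment is half the diagonal one -/
lemma FS.had_relation (hsphere : ∀ᵐ ψ ∂μ, ‖ψ‖ = 1)
    (hinv : ∀ U : EuclideanSpace ℂ (Fin d) ≃ₗᵢ[ℂ] EuclideanSpace ℂ (Fin d),
      μ.map U = μ) {i k : Fin d} (hik : i ≠ k) :
    ∫ ψ, FS.mono i i k k ψ ∂μ = (∫ ψ, FS.mono i i i i ψ ∂μ) / 2 := by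
  have hki : ¬ k = i := fun h => hik h.symm
  have Hi : ∀ x y z w : Fin d, Integrable (FS.mono x y z w) μ :=
    fun x y z w => FS.mono_integrable μ hsphere x y z w
  have hswap : ∫ ψ, FS.mono k k k k ψ ∂μ = ∫ ψ, FS.mono i i i i ψ ∂μ := by
    have h := FS.perm_inv μ hinv (Equiv.swap i k) i i i i
    simpa [Equiv.swap_apply_left] using h
  set H := FS.had i k hik with hH
  have houteri : ∀ ψ : EuclideanSpace ℂ (Fin d),
      H ψ i = (ψ i + ψ k) / ((Real.sqrt 2 : ℝ) : ℂ) := fun ψ => by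
    show FS.hadFun i k ψ i = _
    simp [FS.hadFun]
  have hss : ((Real.sqrt 2 : ℝ) : ℂ) * ((Real.sqrt 2 : ℝ) : ℂ) = 2 := by
    rw [← pow_two]; exact FS.s2
  have key : ∀ ψ, FS.mono i i i i (H ψ) =
      (1/4 : ℂ) * (FS.mono i i i i ψ + (FS.mono k k k k ψ + ((4:ℂ) * FS.mono i i k k ψ +
       ((2:ℂ) * FS.mono i i i k ψ + ((2:ℂ) * FS.mono i i k i ψ + ((2:ℂ) * FS.mono k i k k ψ +
       ((2:ℂ) * FS.mono i k k k ψ + (FS.mono i k i k ψ + FS.mono k i k i ψ)))))))) := by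
    intro ψ
    simp only [FS.mono, houteri]
    simp only [map_div₀, map_add, Complex.conj_ofReal]
    rw [div_mul_div_comm, div_mul_div_comm, hss]
    ring
  set vecG : Fin 9 → (EuclideanSpace ℂ (Fin d) → ℂ) :=
    ![FS.mono i i i i, FS.mono k k k k, fun ψ => (4:ℂ) * FS.mono i i k k ψ,
      fun ψ => (2:ℂ) * FS.mono i i i k ψ, fun ψ => (2:ℂ) * FS.mono i i k i ψ,
      fun ψ => (2:ℂ) * FS.mono k i k k ψ, fun ψ => (2:ℂ) * FS.mono i k k k ψ,
      FS.mono i k i k, FS.mono k i k i] with hvecG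
  have key2 : ∀ ψ, FS.mono i i i i (H ψ) = (1/4 : ℂ) * ∑ t : Fin 9, vecG t ψ := by
    intro ψ
    rw [key ψ]
    simp only [hvecG, Fin.sum_univ_succ, Finset.univ_eq_empty, Finset.sum_empty,
      Matrix.cons_val_zero, Matrix.cons_val_succ, Fin.sum_univ_zero]
    ring
  have hGint : ∀ t : Fin 9, Integrable (vecG t) μ := by
    intro t
    fin_cases t <;>
      simp only [hvecG, Matrix.cons_val_zero, Matrix.cons_val_one, Matrix.head_cons,
        Matrix.cons_val_succ] <;>
      first
        | exact Hi _ _ _ _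
        | exact (Hi _ _ _ _).const_mul _
  have heq : ∫ ψ, FS.mono i i i i ψ ∂μ =
      (1/4 : ℂ) * ((∫ ψ, FS.mono i i i i ψ ∂μ) + ((∫ ψ, FS.mono k k k k ψ ∂μ) +
        ((4:ℂ) * (∫ ψ, FS.mono i i k k ψ ∂μ) +
        ((2:ℂ) * (∫ ψ, FS.mono i i i k ψ ∂μ) + ((2:ℂ) * (∫ ψ, FS.mono i i k i ψ ∂μ) +
        ((2:ℂ) * (∫ ψ, FS.mono k i k k ψ ∂μ) + ((2:ℂ) * (∫ ψ, FS.mono i k k k ψ ∂μ) +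
        ((∫ ψ, FS.mono i k i k ψ ∂μ) + (∫ ψ, FS.mono k i k i ψ ∂μ))))))))) := by
    conv_lhs => rw [← FS.int_inv μ hinv H (FS.mono i i i i)]
    simp_rw [key2]
    rw [integral_const_mul]
    rw [integral_finset_sum _ (fun t _ => hGint t)]
    congr 1
    simp only [hvecG, Fin.sum_univ_succ, Fin.sum_univ_zero, Matrix.cons_val_zero,
      Matrix.cons_val_succ, add_zero]
    rw [integral_const_mul, integral_const_mul, integral_const_mul, integral_const_mul,
      integral_const_mul]
  -- now kill the six vanishing integrals
  have Z1 : ∫ ψ, FS.mono i i i k ψ ∂μ = 0 := FS.vanish μ hinv (by tauto) (by tauto)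
  have Z2 : ∫ ψ, FS.mono i i k i ψ ∂μ = 0 := FS.vanish μ hinv (by tauto) (by tauto)
  have Z3 : ∫ ψ, FS.mono k i k k ψ ∂μ = 0 := FS.vanish μ hinv (by tauto) (by tauto)
  have Z4 : ∫ ψ, FS.mono i k k k ψ ∂μ = 0 := FS.vanish μ hinv (by tauto) (by tauto)
  have Z5 : ∫ ψ, FS.mono i k i k ψ ∂μ = 0 := FS.vanish μ hinv (by tauto) (by tauto)
  have Z6 : ∫ ψ, FS.mono k i k i ψ ∂μ = 0 := FS.vanish μ hinv (by tauto) (by tauto)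
  rw [hswap, Z1, Z2, Z3, Z4, Z5, Z6] at heq
  linear_combination -heq

/-- normalization -/
lemma FS.normalization (hsphere : ∀ᵐ ψ ∂μ, ‖ψ‖ = 1) :
    ∑ i : Fin d, ∑ k : Fin d, ∫ ψ, FS.mono i i k k ψ ∂μ = 1 := by
  have Hi : ∀ x y z w : Fin d, Integrable (FS.mono x y z w) μ :=
    fun x y z w => FS.mono_integrable μ hsphere x y z w
  have step1 : ∀ i : Fin d, ∑ k : Fin d, ∫ ψ, FS.mono i i k k ψ ∂μ
      = ∫ ψ, ∑ k : Fin d, FS.mono i i k k ψ ∂μ := fun i =>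
    (integral_finset_sum Finset.univ (fun k _ => Hi i i k k)).symm
  simp_rw [step1]
  rw [← integral_finset_sum Finset.univ
    (fun i _ => integrable_finset_sum Finset.univ (fun k _ => Hi i i k k))]
  have hsphere2 : ∀ᵐ ψ ∂μ, (∑ i : Fin d, ∑ k : Fin d, FS.mono i i k k ψ) = 1 := by
    filter_upwards [hsphere] with ψ hψ
    have hsum : (∑ i : Fin d, (starRingEnd ℂ) (ψ i) * ψ i) = 1 := by
      have h1 : ∀ i : Fin d, (starRingEnd ℂ) (ψ i) * ψ i = ((‖ψ i‖^2 : ℝ) : ℂ) := by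
        intro i
        rw [mul_comm, Complex.mul_conj, Complex.normSq_eq_norm_sq]
      simp_rw [h1]
      rw [← Complex.ofReal_sum]
      have : (∑ i : Fin d, ‖ψ i‖^2) = 1 := by
        have := EuclideanSpace.norm_eq ψ
        rw [hψ] at this
        exact (Real.sqrt_eq_one.mp this.symm)
      rw [this]
      norm_num
    calc (∑ i : Fin d, ∑ k : Fin d, FS.mono i i k k ψ)
        = (∑ i : Fin d, (starRingEnd ℂ) (ψ i) * ψ i) *
          (∑ k : Fin d, (starRingEnd ℂ) (ψ k) * ψ k) := by
          rw [Finset.sum_mul_sum]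
          simp [FS.mono]
      _ = 1 := by rw [hsum]; norm_num
  rw [integral_congr_ae hsphere2]
  simp

end FSaux

theorem fubini_study_quartic_average
    (d : ℕ) [MeasurableSpace (EuclideanSpace ℂ (Fin d))]
    [BorelSpace (EuclideanSpace ℂ (Fin d))]
    (μ : Measure (EuclideanSpace ℂ (Fin d))) [IsProbabilityMeasure μ]
    -- μ is supported on the unit sphere (pure states)
    (hsphere : ∀ᵐ ψ ∂μ, ‖ψ‖ = 1)
    -- μ is unitarily invariant (the Fubini–Study measure)
    (hinv : ∀ U : EuclideanSpace ℂ (Fin d) ≃ₗᵢ[ℂ] EuclideanSpace ℂ (Fin d),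
      μ.map U = μ)
    (M N : EuclideanSpace ℂ (Fin d) →ₗ[ℂ] EuclideanSpace ℂ (Fin d)) :
    ∫ ψ, (inner (𝕜 := ℂ) ψ (M ψ)) * (inner (𝕜 := ℂ) ψ (N ψ)) ∂μ
      = (LinearMap.trace ℂ (EuclideanSpace ℂ (Fin d)) (M ∘ₗ N)
          + LinearMap.trace ℂ (EuclideanSpace ℂ (Fin d)) M *
            LinearMap.trace ℂ (EuclideanSpace ℂ (Fin d)) N) / (d * (d + 1)) := by
  classical
  rcases Nat.eq_zero_or_pos d with hd0 | hdpos
  · exfalso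
    have hne : μ ≠ 0 := IsProbabilityMeasure.ne_zero μ
    have hbot : (MeasureTheory.ae μ).NeBot := ae_neBot.mpr hne
    obtain ⟨ψ, hψ⟩ := hsphere.exists
    have h0 : ‖ψ‖ = 0 := by
      rw [EuclideanSpace.norm_eq]
      subst hd0
      simp
    rw [hψ] at h0
    norm_num at h0
  · have Hi : ∀ x y z w : Fin d, Integrable (FS.mono x y z w) μ :=
      fun x y z w => FS.mono_integrable μ hsphere x y z w
    set i0 : Fin d := ⟨0, hdpos⟩ with hi0
    set a : ℂ := ∫ ψ, FS.mono i0 i0 i0 i0 ψ ∂μ with ha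
    have hdiag : ∀ i : Fin d, ∫ ψ, FS.mono i i i i ψ ∂μ = a := by
      intro i
      rw [ha]
      have h := FS.perm_inv μ hinv (Equiv.swap i0 i) i0 i0 i0 i0
      rw [Equiv.swap_apply_left] at h
      exact h
    have hcross : ∀ i k : Fin d, i ≠ k → ∫ ψ, FS.mono i i k k ψ ∂μ = a / 2 := by
      intro i k hik
      rw [FS.had_relation μ hsphere hinv hik, hdiag i]
    set c : ℂ := a / 2 with hcdef
    have hnorm : ((d:ℂ) * d + d) * c = 1 := by
      have h := FS.normalization μ hsphere
      have hval : ∀ i k : Fin d, (∫ ψ, FS.mono i i k k ψ ∂μ) = c + (if i = k then c else 0) := by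
        intro i k
        by_cases hik : i = k
        · subst hik
          rw [hdiag i]
          simp [hcdef]
        · rw [hcross i k hik]
          simp [hik, hcdef]
      simp_rw [hval] at h
      simp only [Finset.sum_add_distrib, Finset.sum_const, Finset.card_univ,
        Fintype.card_fin, nsmul_eq_mul, Finset.sum_ite_eq, Finset.mem_univ, if_true] at h
      linear_combination h
    have hdne : ((d:ℂ) * ((d:ℂ) + 1)) ≠ 0 := by
      have h1 : (d:ℂ) ≠ 0 := Nat.cast_ne_zero.mpr (Nat.pos_iff_ne_zero.mp hdpos)
      have h2 : ((d:ℂ) + 1) ≠ 0 := by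
        have : ((d:ℂ) + 1) = ((d + 1 : ℕ) : ℂ) := by push_cast; ring
        rw [this]
        exact Nat.cast_ne_zero.mpr (Nat.succ_ne_zero d)
      exact mul_ne_zero h1 h2
    have hT : ∀ i j k l : Fin d, ∫ ψ, FS.mono i j k l ψ ∂μ =
        (if j = i ∧ l = k then c else 0) + (if j = k ∧ l = i then c else 0) := by
      intro i j k l
      by_cases h1 : j = i ∧ l = k
      · obtain ⟨hji, hlk⟩ := h1
        subst hji
        subst hlk
        by_cases h2 : j = l
        · subst h2
          rw [hdiag j]
          simp [hcdef]
        · rw [hcross j l h2]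
          have hcond : ¬ (j = l ∧ l = j) := fun hh => h2 hh.1
          simp [hcond, hcdef]
      · by_cases h2 : j = k ∧ l = i
        · obtain ⟨hjk, hli⟩ := h2
          subst hjk
          subst hli
          -- mono l j j l with ¬(j = l ∧ l = j), so j ≠ l
          have hlj : l ≠ j := fun hh => h1 ⟨hh.symm, hh⟩
          have hpt : ∀ ψ, FS.mono l j j l ψ = FS.mono l l j j ψ := by
            intro ψ
            simp only [FS.mono]
            ring
          simp_rw [hpt]
          rw [hcross l j (fun hh => hlj hh)]
          have hcond : ¬ (j = l ∧ l = j) := fun hh => hlj hh.2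
          simp [hcond, hcdef]
        · rw [FS.vanish μ hinv h1 h2]
          simp [h1, h2]
    -- matrix entries
    set A : Fin d → Fin d → ℂ := fun x y => (M (EuclideanSpace.single y (1:ℂ))) x with hA
    set B : Fin d → Fin d → ℂ := fun x y => (N (EuclideanSpace.single y (1:ℂ))) x with hB
    have hsumapply : ∀ (v : Fin d → EuclideanSpace ℂ (Fin d)) (x : Fin d),
        (∑ y, v y) x = ∑ y, (v y) x := by
      intro v x
      exact map_sum (EuclideanSpace.projₗ (𝕜 := ℂ) x) v Finset.univ
    have happly : ∀ (L : EuclideanSpace ℂ (Fin d) →ₗ[ℂ] EuclideanSpace ℂ (Fin d))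
        (ψ : EuclideanSpace ℂ (Fin d)) (x : Fin d),
        L ψ x = ∑ y, (L (EuclideanSpace.single y (1:ℂ))) x * ψ y := by
      intro L ψ x
      have hψ : ψ = ∑ y : Fin d, ψ y • EuclideanSpace.single y (1:ℂ) := by
        have h := (EuclideanSpace.basisFun (Fin d) ℂ).sum_repr ψ
        simp only [EuclideanSpace.basisFun_apply, EuclideanSpace.basisFun_repr] at h
        exact h.symm
      conv_lhs => rw [hψ, map_sum]
      rw [hsumapply]
      apply Finset.sum_congr rfl
      intro y _
      rw [L.map_smul]
      rw [PiLp.smul_apply, smul_eq_mul]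
      ring
    have htrace : ∀ (L : EuclideanSpace ℂ (Fin d) →ₗ[ℂ] EuclideanSpace ℂ (Fin d)),
        LinearMap.trace ℂ (EuclideanSpace ℂ (Fin d)) L
          = ∑ x, (L (EuclideanSpace.single x (1:ℂ))) x := by
      intro L
      rw [LinearMap.trace_eq_matrix_trace ℂ ((EuclideanSpace.basisFun (Fin d) ℂ).toBasis) L,
        Matrix.trace]
      apply Finset.sum_congr rfl
      intro x _
      rw [Matrix.diag_apply, LinearMap.toMatrix_apply]
      simp [OrthonormalBasis.coe_toBasis_repr_apply, OrthonormalBasis.coe_toBasis,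
        EuclideanSpace.basisFun_apply, EuclideanSpace.basisFun_repr]
    have hpt : ∀ ψ : EuclideanSpace ℂ (Fin d),
        (inner (𝕜 := ℂ) ψ (M ψ)) * (inner (𝕜 := ℂ) ψ (N ψ))
          = ∑ i, ∑ j, ∑ k, ∑ l, (A i j * B k l) * FS.mono i j k l ψ := by
      intro ψ
      have e1 : (inner (𝕜 := ℂ) ψ (M ψ) : ℂ)
          = ∑ i, ∑ j, (starRingEnd ℂ) (ψ i) * (A i j * ψ j) := by
        rw [PiLp.inner_apply]
        apply Finset.sum_congr rfl
        intro i _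
        rw [RCLike.inner_apply, happly M ψ i, Finset.sum_mul]
        refine Finset.sum_congr rfl (fun j _ => ?_); simp only [hA]; ring
      have e2 : (inner (𝕜 := ℂ) ψ (N ψ) : ℂ)
          = ∑ k, ∑ l, (starRingEnd ℂ) (ψ k) * (B k l * ψ l) := by
        rw [PiLp.inner_apply]
        apply Finset.sum_congr rfl
        intro k _
        rw [RCLike.inner_apply, happly N ψ k, Finset.sum_mul]
        refine Finset.sum_congr rfl (fun j _ => ?_); simp only [hB]; ring
      rw [e1, e2, Finset.sum_mul_sum]
      apply Finset.sum_congr rfl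
      intro i _
      rw [Finset.sum_comm]
      apply Finset.sum_congr rfl
      intro k _
      rw [Finset.sum_mul_sum]
      apply Finset.sum_congr rfl
      intro j _
      apply Finset.sum_congr rfl
      intro l _
      simp only [FS.mono, hA, hB]
      ring
    have hint4 : ∀ i j k l : Fin d,
        Integrable (fun ψ => (A i j * B k l) * FS.mono i j k l ψ) μ :=
      fun i j k l => (Hi i j k l).const_mul _
    have hInt : ∫ ψ, (inner (𝕜 := ℂ) ψ (M ψ)) * (inner (𝕜 := ℂ) ψ (N ψ)) ∂μ
        = ∑ i, ∑ j, ∑ k, ∑ l, (A i j * B k l) * (∫ ψ, FS.mono i j k l ψ ∂μ) := by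
      rw [integral_congr_ae (Filter.Eventually.of_forall hpt)]
      rw [integral_finset_sum _ (fun i _ => integrable_finset_sum _ (fun j _ =>
        integrable_finset_sum _ (fun k _ => integrable_finset_sum _ (fun l _ => hint4 i j k l))))]
      apply Finset.sum_congr rfl
      intro i _
      rw [integral_finset_sum _ (fun j _ =>
        integrable_finset_sum _ (fun k _ => integrable_finset_sum _ (fun l _ => hint4 i j k l)))]
      apply Finset.sum_congr rfl
      intro j _
      rw [integral_finset_sum _ (fun k _ => integrable_finset_sum _ (fun l _ => hint4 i j k l))]
      apply Finset.sum_congr rfl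
      intro k _
      rw [integral_finset_sum _ (fun l _ => hint4 i j k l)]
      apply Finset.sum_congr rfl
      intro l _
      exact integral_const_mul _ _
    rw [hInt]
    simp_rw [hT]
    -- traces
    have htrM : LinearMap.trace ℂ (EuclideanSpace ℂ (Fin d)) M = ∑ x, A x x := htrace M
    have htrN : LinearMap.trace ℂ (EuclideanSpace ℂ (Fin d)) N = ∑ x, B x x := htrace N
    have htrMN : LinearMap.trace ℂ (EuclideanSpace ℂ (Fin d)) (M ∘ₗ N)
        = ∑ x, ∑ y, A x y * B y x := by
      rw [htrace (M ∘ₗ N)]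
      apply Finset.sum_congr rfl
      intro x _
      rw [LinearMap.comp_apply, happly M]
    rw [htrM, htrN, htrMN]
    -- collapse the Kronecker deltas
    have hS : (∑ i, ∑ j, ∑ k, ∑ l : Fin d, (A i j * B k l) *
        ((if j = i ∧ l = k then c else 0) + (if j = k ∧ l = i then c else 0)))
        = c * ((∑ x, ∑ y, A x y * B y x) + (∑ x, A x x) * (∑ x, B x x)) := by
      simp only [mul_add, Finset.sum_add_distrib, mul_ite, mul_zero, ite_and,
        Finset.sum_ite_eq, Finset.sum_ite_eq', Finset.mem_univ, if_true,
        Finset.sum_ite_irrel, Finset.sum_const_zero]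
      have hexp : (∑ x, A x x) * (∑ x, B x x) = ∑ x, ∑ y, A x x * B y y :=
        Finset.sum_mul_sum _ _ _ _
      rw [hexp]
      simp only [Finset.mul_sum]
      rw [add_comm]
      congr 1 <;>
        (apply Finset.sum_congr rfl; intro x _; apply Finset.sum_congr rfl; intro y _; ring)
    rw [hS]
    rw [eq_div_iff hdne]
    linear_combination ((∑ x, ∑ y, A x y * B y x) + (∑ x, A x x) * (∑ x, B x x)) * hnorm
end
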